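/- arXiv:2512.10410 — 5 statements merged into one kernel-verified Lean document; each statement's English description precedes it below -/
import Mathlib

section
/- For unital C*-algebras A and B, the minimal Namioka–Phelps tensor product of the state spaces equals the set of separable states: S(A) ⊗_* S(B) = S_*(A⊗B), where the identification is by restriction of states on A⊗B to the algebraic tensor product A_sa ⊙ B_sa. -/
open scoped TensorProduct ComplexOrder ENNReal

namespace CStarNP

variable (A : Type*) (B : Type*) [CStarAlgebra A] [CStarAlgebra B]

/-- The state space of a unital C*-algebra, as a set of linear functionals. -/
def states : Set (A →ₗ[ℂ] ℂ) := {φ | φ 1 = 1 ∧ ∀ a : A, 0 ≤ φ (star a * a)}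

/-- The product functional `φ ⊗ ψ` on the algebraic tensor product. -/
noncomputable def prodFunctional (φ : A →ₗ[ℂ] ℂ) (ψ : B →ₗ[ℂ] ℂ) : (A ⊗[ℂ] B) →ₗ[ℂ] ℂ :=
  (TensorProduct.lid ℂ ℂ).toLinearMap ∘ₗ TensorProduct.map φ ψ

/-- The positive cone `(A ⊙ B)⁺ = {x* x : x ∈ A ⊙ B}` of the algebraic tensor product,
expressed via families (so as to avoid a star operation on the tensor product). -/
def algPos : Set (A ⊗[ℂ] B) :=
  {z | ∃ (n : ℕ) (a : Fin n → A) (b : Fin n → B),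
    z = ∑ i, ∑ j, (star (a i) * a j) ⊗ₜ[ℂ] (star (b i) * b j)}

/-- The cone `A⁺ ⊙ B⁺` generated by elementary tensors of positive elements. -/
def elemPosCone : Set (A ⊗[ℂ] B) :=
  (AddSubmonoid.closure {z | ∃ (a : A) (b : B), z = (star a * a) ⊗ₜ[ℂ] (star b * b)} : Set (A ⊗[ℂ] B))

/-- The real span `A_sa ⊙ B_sa` inside `A ⊙ B`. -/
noncomputable def saSpan : Submodule ℝ (A ⊗[ℂ] B) :=
  Submodule.span ℝ {z | ∃ (a : A) (b : B), IsSelfAdjoint a ∧ IsSelfAdjoint b ∧ z = a ⊗ₜ[ℂ] b}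

/-- The outer cone `A⁺ ⊗̂ B⁺`. -/
def hatCone : Set (A ⊗[ℂ] B) :=
  {z | z ∈ saSpan A B ∧ ∀ φ ∈ states A, ∀ ψ ∈ states B, 0 ≤ prodFunctional A B φ ψ z}

/-- `gnsNorm S x` is `sup |⟨π(x) w Ω, v Ω⟩|` over functionals in `S` and vectors `v, w`
in the corresponding GNS representations of norm at most one. -/
noncomputable def gnsNorm (S : Set ((A ⊗[ℂ] B) →ₗ[ℂ] ℂ)) (x : A ⊗[ℂ] B) : ℝ :=
  sSup {r | ∃ φ ∈ S, ∃ (n m : ℕ) (a : Fin n → A) (b : Fin n → B) (c : Fin m → A) (d : Fin m → B),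
    (φ ((∑ i, star (a i) ⊗ₜ[ℂ] star (b i)) * (∑ i, a i ⊗ₜ[ℂ] b i))).re ≤ 1 ∧
    (φ ((∑ j, star (c j) ⊗ₜ[ℂ] star (d j)) * (∑ j, c j ⊗ₜ[ℂ] d j))).re ≤ 1 ∧
    r = ‖φ ((∑ i, star (a i) ⊗ₜ[ℂ] star (b i)) * x * (∑ j, c j ⊗ₜ[ℂ] d j))‖}

/-- Algebraic states on `A ⊙ B`: unital and positive on `(A ⊙ B)⁺`. -/
def algStates : Set ((A ⊗[ℂ] B) →ₗ[ℂ] ℂ) :=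
  {ρ | ρ 1 = 1 ∧ ∀ z ∈ algPos A B, 0 ≤ ρ z}

/-- The maximal C*-tensor norm on `A ⊙ B`. -/
noncomputable def maxNorm : A ⊗[ℂ] B → ℝ := gnsNorm A B (algStates A B)

/-- The minimal (spatial) C*-tensor norm on `A ⊙ B`. -/
noncomputable def minNorm : A ⊗[ℂ] B → ℝ :=
  gnsNorm A B {ω | ∃ φ ∈ states A, ∃ ψ ∈ states B, ω = prodFunctional A B φ ψ}

/-- The state space of `A ⊗ B` (minimal tensor product), identified with the set of its
restrictions to the algebraic tensor product. -/
def minStates : Set ((A ⊗[ℂ] B) →ₗ[ℂ] ℂ) :=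
  {ρ | ρ 1 = 1 ∧ (∀ z ∈ algPos A B, 0 ≤ ρ z) ∧ ∀ x, ‖ρ x‖ ≤ minNorm A B x}

/-- The state space of `A ⊗_max B`, identified with the set of its
restrictions to the algebraic tensor product. -/
def maxStates : Set ((A ⊗[ℂ] B) →ₗ[ℂ] ℂ) :=
  {ρ | ρ 1 = 1 ∧ (∀ z ∈ algPos A B, 0 ≤ ρ z) ∧ ∀ x, ‖ρ x‖ ≤ maxNorm A B x}

/-- Product state functions. -/
noncomputable def prodStateFns : Set ((A ⊗[ℂ] B) → ℂ) :=
  {f | ∃ φ ∈ states A, ∃ ψ ∈ states B, f = ⇑(prodFunctional A B φ ψ)}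

/-- The separable states `S_*(A ⊗ B)`: the weak*-closed convex hull of the product states. -/
noncomputable def sepStates : Set ((A ⊗[ℂ] B) →ₗ[ℂ] ℂ) :=
  {ρ | ⇑ρ ∈ closure (convexHull ℝ (prodStateFns A B))}

/-- The minimal Namioka--Phelps tensor product `S(A) ⊗_* S(B)`. -/
def minTensorStates : Set ((A ⊗[ℂ] B) →ₗ[ℂ] ℂ) :=
  {ρ | ρ 1 = 1 ∧ ∀ z ∈ hatCone A B, 0 ≤ ρ z}

/-- The maximal Namioka--Phelps tensor product `S(A) ⊗^* S(B)`. -/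
def maxTensorStates : Set ((A ⊗[ℂ] B) →ₗ[ℂ] ℂ) :=
  {ρ | ρ 1 = 1 ∧ ∀ (a : A) (b : B), 0 ≤ ρ ((star a * a) ⊗ₜ[ℂ] (star b * b))}

/-- The constant `κ(A, B)`. -/
noncomputable def kappa : ℝ≥0∞ :=
  ⨆ ρ ∈ maxTensorStates A B, ⨆ x ∈ {x | maxNorm A B x ≤ 1}, ENNReal.ofReal ‖ρ x‖

end CStarNP

/-!
`minTensorStates` is a closed convex set of functionals containing the product states, so it
contains their closed convex hull `sepStates`. Conversely, if `ρ ∈ minTensorStates` is separated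
from the separable states by a continuous functional of the product topology, that functional is
`τ ↦ Re τ z₀` for some `z₀ ∈ A ⊙ B`. Every `τ ∈ minTensorStates` is real on `A_sa ⊙ B_sa`,
because self-adjoint elements are differences of squares, so elementary tensors of self-adjoint
elements are real combinations of elements of the cone `A⁺ ⊗̂ B⁺`. Writing `z₀ = x + i y` with
`x, y ∈ A_sa ⊙ B_sa` therefore gives `Re τ z₀ = Re τ x`, and `x - u • 1` lies in `A⁺ ⊗̂ B⁺`
for the separating level `u`, while `ρ` is negative on it.
-/

theorem ContinuousLinearMap.exists_finset_eq_sum_single {ι M : Type*} [DecidableEq ι]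
    [TopologicalSpace M] [AddCommGroup M] [Module ℝ M] (f : (ι → M) →L[ℝ] ℝ) :
    ∃ s : Finset ι, ∀ g : ι → M, f g = ∑ i ∈ s, f (Pi.single i (g i)) := by
  have hU : f ⁻¹' Set.Ioo (-1) 1 ∈ nhds (0 : ι → M) :=
    (isOpen_Ioo.preimage f.continuous).mem_nhds (by simp)
  rw [nhds_pi, Filter.mem_pi] at hU
  obtain ⟨I, hI, t, ht, hbox⟩ := hU
  -- `f` is bounded on the box `I.pi t`, which contains every line through a vector vanishing on `I`
  have hvanish : ∀ h : ι → M, (∀ i ∈ I, h i = 0) → f h = 0 := by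
    intro h h0
    by_contra hne
    have hmem : (2 / f h) • h ∈ I.pi t := fun i hi => by
      simpa [h0 i hi] using mem_of_mem_nhds (ht i)
    have := hbox hmem
    simp [div_mul_cancel₀ _ hne] at this
  refine ⟨hI.toFinset, fun g => ?_⟩
  have := hvanish (g - ∑ i ∈ hI.toFinset, Pi.single i (g i)) fun i hi => by
    simp [Finset.sum_pi_single, hi]
  rwa [map_sub, map_sum, sub_eq_zero] at this

theorem Complex.linearMap_apply_eq_re_mul (ℓ : ℂ →ₗ[ℝ] ℝ) (c : ℂ) :
    ℓ c = ((ℓ 1 - ℓ I * I) * c).re := by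
  have hc : c = c.re • (1 : ℂ) + c.im • I := by simp
  conv_lhs => rw [hc, map_add, map_smul, map_smul]
  simp [Complex.mul_re, mul_comm]

theorem ContinuousLinearMap.exists_eq_re_sum_mul {ι : Type*} (f : (ι → ℂ) →L[ℝ] ℝ) :
    ∃ (s : Finset ι) (w : ι → ℂ), ∀ g : ι → ℂ, f g = (∑ i ∈ s, w i * g i).re := by
  classical
  obtain ⟨s, hs⟩ := f.exists_finset_eq_sum_single
  let ℓ (i : ι) : ℂ →ₗ[ℝ] ℝ := f.toLinearMap ∘ₗ LinearMap.single ℝ (fun _ => ℂ) i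
  refine ⟨s, fun i => ℓ i 1 - ℓ i Complex.I * Complex.I, fun g => ?_⟩
  rw [hs, Complex.re_sum]
  exact Finset.sum_congr rfl fun i _ => Complex.linearMap_apply_eq_re_mul (ℓ i) (g i)

theorem IsSelfAdjoint.exists_eq_star_mul_self_sub_star_mul_self {A : Type*} [CStarAlgebra A]
    {a : A} (ha : IsSelfAdjoint a) : ∃ x y : A, a = star x * x - star y * y := by
  let _ := CStarAlgebra.spectralOrder A
  let _ := CStarAlgebra.spectralOrderedRing A
  obtain ⟨x, hx⟩ := CStarAlgebra.nonneg_iff_eq_star_mul_self.mp (CFC.posPart_nonneg a)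
  obtain ⟨y, hy⟩ := CStarAlgebra.nonneg_iff_eq_star_mul_self.mp (CFC.negPart_nonneg a)
  exact ⟨x, y, by rw [← hx, ← hy, CFC.posPart_sub_negPart a ha]⟩

namespace CStarNP

open scoped ComplexStarModule

variable {A B : Type*} [CStarAlgebra A] [CStarAlgebra B]

@[simp]
theorem prodFunctional_tmul (φ : A →ₗ[ℂ] ℂ) (ψ : B →ₗ[ℂ] ℂ) (a : A) (b : B) :
    prodFunctional A B φ ψ (a ⊗ₜ[ℂ] b) = φ a * ψ b := by
  simp [prodFunctional]

theorem prodFunctional_mem_minTensorStates {φ : A →ₗ[ℂ] ℂ} {ψ : B →ₗ[ℂ] ℂ}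
    (hφ : φ ∈ states A) (hψ : ψ ∈ states B) : prodFunctional A B φ ψ ∈ minTensorStates A B :=
  ⟨by rw [Algebra.TensorProduct.one_def, prodFunctional_tmul, hφ.1, hψ.1, one_mul],
    fun _ hz => hz.2 φ hφ ψ hψ⟩

theorem star_mul_self_tmul_mem_hatCone (x : A) (y : B) :
    (star x * x) ⊗ₜ[ℂ] (star y * y) ∈ hatCone A B := by
  refine ⟨Submodule.subset_span ⟨_, _, .star_mul_self x, .star_mul_self y, rfl⟩,
    fun φ hφ ψ hψ => ?_⟩
  rw [prodFunctional_tmul]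
  exact mul_nonneg (hφ.2 x) (hψ.2 y)

theorem one_mem_saSpan : (1 : A ⊗[ℂ] B) ∈ saSpan A B :=
  Submodule.subset_span ⟨1, 1, .one A, .one B, Algebra.TensorProduct.one_def⟩

theorem exists_mem_saSpan_add_I_smul (z : A ⊗[ℂ] B) :
    ∃ x ∈ saSpan A B, ∃ y ∈ saSpan A B, z = x + Complex.I • y := by
  induction z using TensorProduct.induction_on with
  | zero => exact ⟨0, zero_mem _, 0, zero_mem _, by simp⟩
  | tmul a b =>
    have mem (a : selfAdjoint A) (b : selfAdjoint B) : (a : A) ⊗ₜ[ℂ] (b : B) ∈ saSpan A B :=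
      Submodule.subset_span ⟨a, b, a.2, b.2, rfl⟩
    refine ⟨_, sub_mem (mem (ℜ a) (ℜ b)) (mem (ℑ a) (ℑ b)),
      _, add_mem (mem (ℜ a) (ℑ b)) (mem (ℑ a) (ℜ b)), ?_⟩
    conv_lhs => rw [← realPart_add_I_smul_imaginaryPart a, ← realPart_add_I_smul_imaginaryPart b]
    simp only [TensorProduct.add_tmul, TensorProduct.tmul_add, ← TensorProduct.smul_tmul',
      TensorProduct.tmul_smul, smul_add, smul_smul, Complex.I_mul_I]
    module
  | add z z' hz hz' =>
    obtain ⟨x, hx, y, hy, rfl⟩ := hz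
    obtain ⟨x', hx', y', hy', rfl⟩ := hz'
    exact ⟨x + x', add_mem hx hx', y + y', add_mem hy hy', by module⟩

theorem saSpan_le_span_hatCone : saSpan A B ≤ Submodule.span ℝ (hatCone A B) := by
  rw [saSpan, Submodule.span_le]
  rintro _ ⟨a, b, ha, hb, rfl⟩
  obtain ⟨x, x', rfl⟩ := ha.exists_eq_star_mul_self_sub_star_mul_self
  obtain ⟨y, y', rfl⟩ := hb.exists_eq_star_mul_self_sub_star_mul_self
  have mem (x : A) (y : B) : (star x * x) ⊗ₜ[ℂ] (star y * y) ∈ Submodule.span ℝ (hatCone A B) :=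
    Submodule.subset_span (star_mul_self_tmul_mem_hatCone x y)
  rw [TensorProduct.sub_tmul, TensorProduct.tmul_sub, TensorProduct.tmul_sub]
  exact sub_mem (sub_mem (mem x y) (mem x y')) (sub_mem (mem x' y) (mem x' y'))

section
variable {ρ : (A ⊗[ℂ] B) →ₗ[ℂ] ℂ} (hρ : ρ ∈ minTensorStates A B)
include hρ

theorem im_apply_eq_zero_of_mem_saSpan {z : A ⊗[ℂ] B} (hz : z ∈ saSpan A B) : (ρ z).im = 0 := by
  have : Submodule.span ℝ (hatCone A B) ≤ LinearMap.ker (Complex.imLm ∘ₗ ρ.restrictScalars ℝ) :=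
    Submodule.span_le.2 fun z hz => (Complex.nonneg_iff.1 (hρ.2 z hz)).2.symm
  exact this (saSpan_le_span_hatCone hz)

theorem zero_le_apply_iff_of_mem_saSpan {z : A ⊗[ℂ] B} (hz : z ∈ saSpan A B) :
    0 ≤ ρ z ↔ 0 ≤ (ρ z).re := by
  simp [Complex.nonneg_iff, im_apply_eq_zero_of_mem_saSpan hρ hz]

theorem re_apply_sub_smul_one (x : A ⊗[ℂ] B) (u : ℝ) :
    (ρ (x - u • 1)).re = (ρ x).re - u := by
  simp [hρ.1]

end

theorem exists_mem_saSpan_forall_re_apply_eq (z : A ⊗[ℂ] B) :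
    ∃ x ∈ saSpan A B, ∀ ρ ∈ minTensorStates A B, (ρ z).re = (ρ x).re := by
  obtain ⟨x, hx, y, hy, rfl⟩ := exists_mem_saSpan_add_I_smul z
  refine ⟨x, hx, fun ρ hρ => ?_⟩
  simp [im_apply_eq_zero_of_mem_saSpan hρ hy]

theorem minTensorStates_subset_sepStates : minTensorStates A B ⊆ sepStates A B := by
  intro ρ hρ
  by_contra hsep
  obtain ⟨f, u, hfρ, hf⟩ :=
    geometric_hahn_banach_point_closed (convex_convexHull ℝ _).closure isClosed_closure hsep
  -- `f` is `τ ↦ Re τ z₀` on linear functionals, and `Re τ z₀ = Re τ x` with `x` self-adjoint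
  obtain ⟨s, w, hw⟩ := f.exists_eq_re_sum_mul
  obtain ⟨x, hx, hre⟩ := exists_mem_saSpan_forall_re_apply_eq (∑ i ∈ s, w i • i)
  have hcsa : x - u • 1 ∈ saSpan A B := sub_mem hx (Submodule.smul_mem _ _ one_mem_saSpan)
  have key (τ) (hτ : τ ∈ minTensorStates A B) : 0 ≤ τ (x - u • 1) ↔ u ≤ f τ := by
    rw [zero_le_apply_iff_of_mem_saSpan hτ hcsa, re_apply_sub_smul_one hτ, ← hre τ hτ, hw]
    simp [map_sum, sub_nonneg]
  have hcone : x - u • 1 ∈ hatCone A B := ⟨hcsa, fun φ hφ ψ hψ =>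
    (key _ (prodFunctional_mem_minTensorStates hφ hψ)).2
      (hf _ (subset_closure (subset_convexHull ℝ _ ⟨φ, hφ, ψ, hψ, rfl⟩))).le⟩
  exact (key ρ hρ).1 (hρ.2 _ hcone) |>.not_gt hfρ

variable (A B) in
def minTensorStateFns : Set (A ⊗[ℂ] B → ℂ) :=
  {g | g 1 = 1 ∧ ∀ z ∈ hatCone A B, 0 ≤ g z}

theorem isClosed_minTensorStateFns : IsClosed (minTensorStateFns A B) := by
  simp only [minTensorStateFns, Set.ofPred_and, Set.ofPred_forall]
  exact (isClosed_eq (continuous_apply 1) continuous_const).inter <| isClosed_iInter fun z =>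
    isClosed_iInter fun _ => isClosed_le continuous_const (continuous_apply z)

theorem convex_minTensorStateFns : Convex ℝ (minTensorStateFns A B) := by
  simp only [minTensorStateFns, Set.ofPred_and, Set.ofPred_forall]
  exact ((convex_singleton 1).linear_preimage (LinearMap.proj 1)).inter <| convex_iInter fun z =>
    convex_iInter fun _ => (convex_Ici 0).linear_preimage (LinearMap.proj z)

theorem prodStateFns_subset_minTensorStateFns : prodStateFns A B ⊆ minTensorStateFns A B := by
  rintro _ ⟨φ, hφ, ψ, hψ, rfl⟩
  exact prodFunctional_mem_minTensorStates hφ hψ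

theorem sepStates_subset_minTensorStates : sepStates A B ⊆ minTensorStates A B := fun _ hρ =>
  closure_minimal (convexHull_min prodStateFns_subset_minTensorStateFns convex_minTensorStateFns)
    isClosed_minTensorStateFns hρ

end CStarNP

/-- For unital C*-algebras `A` and `B`, the minimal Namioka–Phelps tensor
product of the state spaces equals the set of separable states on `A ⊗ B`, both being
identified with sets of linear functionals on the algebraic tensor product. -/
theorem minTensorStates_eq_sepStates (A B : Type*) [CStarAlgebra A] [CStarAlgebra B] :
    CStarNP.minTensorStates A B = CStarNP.sepStates A B :=
  CStarNP.minTensorStates_subset_sepStates.antisymm CStarNP.sepStates_subset_minTensorStates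
end

section
/- Let n, m ≥ 2 be integers. Then S(M_n(ℂ)) ⊗^* S(M_m(ℂ)) = {ρ₀^(m) ∘ (Φ ⊗ id_m) : Φ a positive linear map M_n(ℂ) → M_m(ℂ) with tr(Φ(I_n)) = 1} = {ρ ∘ (Φ ⊗ id_m) : Φ a unital positive linear map M_n(ℂ) → M_m(ℂ), ρ a state on M_m(ℂ) ⊗ M_m(ℂ)}, where ρ₀^(m) is the maximally entangled state on M_m(ℂ) ⊗ M_m(ℂ) and tr is the normalized trace. -/
open scoped TensorProduct ComplexOrder ENNReal

namespace CStarNP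

/-- The matrix-entry functional `M ↦ M i j`. -/
def entryFn {m : ℕ} (i j : Fin m) : Matrix (Fin m) (Fin m) ℂ →ₗ[ℂ] ℂ where
  toFun M := M i j
  map_add' _ _ := rfl
  map_smul' _ _ := rfl

open scoped Matrix.Norms.L2Operator

noncomputable instance matrixCStarAlgebra (n : Type*) [Fintype n] [DecidableEq n] :
    CStarAlgebra (Matrix n n ℂ) where

/-- The maximally entangled state `ρ₀^(m)` on `M_m(ℂ) ⊗ M_m(ℂ)`, the vector state associated
with the unit vector `m^{-1/2} ∑ e_j ⊗ e_j`; it sends `S ⊗ T` to `m⁻¹ ∑_{i,j} S i j * T i j`. -/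
noncomputable def maxEntangledState (m : ℕ) :
    (Matrix (Fin m) (Fin m) ℂ ⊗[ℂ] Matrix (Fin m) (Fin m) ℂ) →ₗ[ℂ] ℂ :=
  (m : ℂ)⁻¹ •
    ∑ i : Fin m, ∑ j : Fin m,
      prodFunctional (Matrix (Fin m) (Fin m) ℂ) (Matrix (Fin m) (Fin m) ℂ)
        (entryFn i j) (entryFn i j)

end CStarNP


/-!
Write `ρ₀` for the maximally entangled state. Every functional `ρ` on `A ⊗ M_m` equals
`ρ₀ ∘ (Ψ ⊗ id)` for `Ψ(a)_{ij} = m ρ(a ⊗ e_{ij})`, and `⟪v, Ψ(a) v⟫ = m ρ(a ⊗ v̄ vᵀ)`, so `Ψ` is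
positive exactly when `ρ` is positive on `A⁺ ⊙ M_m⁺`. This is the first description.

For the second, let `c = Ψ(1)^{1/2}` and let `d` be its Moore–Penrose inverse (it exists because
the spectrum is finite), so that `p = cd` is the support projection of `Ψ(1)`. Since
`0 ≤ Ψ(a) ≤ ‖a‖ Ψ(1)` for `a ≥ 0`, every `Ψ(a)` satisfies `p Ψ(a) p = Ψ(a)`, and therefore
`Φ(a) = d Ψ(a) d + σ(a) (1 - p)`, for any state `σ`, is unital and positive with `Ψ = c Φ(·) c`.
Finally `ρ₀` is the vector state of `ξ = ∑ e_j ⊗ e_j` (scaled by `m⁻¹`) in the Kronecker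
representation, and `ρ = ω ∘ (Φ ⊗ id)` for the vector state `ω` of `(c ⊗ 1) ξ`.
-/

open Matrix
open scoped MatrixOrder Kronecker

section PositiveMap

variable {A B : Type*} [CStarAlgebra B]

lemma IsSelfAdjoint.exists_pseudoInverse {c : B} (hc : IsSelfAdjoint c)
    (hfin : (spectrum ℝ c).Finite) : ∃ d, IsSelfAdjoint d ∧ c * d = d * c ∧ c * d * c = c := by
  have hid : cfc (fun t : ℝ => t) c = c := cfc_id' ℝ c
  refine ⟨cfc (·⁻¹ : ℝ → ℝ) c, cfc_predicate _ _, ?_, ?_⟩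
  · simpa only [hid] using (cfc_commute_cfc (fun t : ℝ => t) (·⁻¹) c).eq
  · calc c * cfc (·⁻¹) c * c = cfc (fun t : ℝ => t) c * cfc (·⁻¹) c * cfc (fun t : ℝ => t) c := by
          rw [hid]
      _ = cfc (fun t : ℝ => t * t⁻¹ * t) c := by
          rw [cfc_mul _ _ _ (hfin.continuousOn _) (hfin.continuousOn _),
            cfc_mul _ _ _ (hfin.continuousOn _) (hfin.continuousOn _)]
      _ = c := by simp only [mul_inv_mul_cancel, hid]

variable [PartialOrder B] [StarOrderedRing B]

lemma mul_eq_zero_of_le_of_star_mul_mul_eq_zero {a b r : B} (ha : 0 ≤ a) (hab : a ≤ b)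
    (hb : star r * b * r = 0) : a * r = 0 := by
  have hconj : star r * a * r = 0 :=
    le_antisymm (hb ▸ star_left_conjugate_le_conjugate hab r) (star_left_conjugate_nonneg ha r)
  obtain ⟨s, rfl⟩ := CStarAlgebra.nonneg_iff_eq_star_mul_self.mp ha
  have hsr : s * r = 0 := by
    rw [← CStarRing.star_mul_self_eq_zero_iff, star_mul, ← hconj]
    noncomm_ring
  rw [mul_assoc, hsr, mul_zero]

variable [CStarAlgebra A] [PartialOrder A] [StarOrderedRing A]

lemma map_le_norm_smul_map_one {Ψ : A →ₗ[ℂ] B} (hΨ : ∀ a, 0 ≤ a → 0 ≤ Ψ a) {a : A}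
    (ha : 0 ≤ a) : Ψ a ≤ (‖a‖ : ℂ) • Ψ 1 := by
  have hle : a ≤ (‖a‖ : ℂ) • 1 := by
    simpa [Algebra.algebraMap_eq_smul_one, Complex.coe_smul] using
      (IsSelfAdjoint.of_nonneg ha).le_algebraMap_norm_self
  rw [← sub_nonneg, ← LinearMap.map_smul, ← map_sub]
  exact hΨ _ (sub_nonneg.mpr hle)

lemma IsStarProjection.mul_map_mul_eq {Ψ : A →ₗ[ℂ] B} (hΨ : ∀ a, 0 ≤ a → 0 ≤ Ψ a) {p : B}
    (hp : IsStarProjection p) (h : (1 - p) * Ψ 1 * (1 - p) = 0) (a : A) :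
    p * Ψ a * p = Ψ a := by
  have hr := hp.one_sub.isSelfAdjoint
  have hright : LinearMap.mulRight ℂ (1 - p) ∘ₗ Ψ = 0 := by
    refine LinearMap.ext_on CStarAlgebra.span_nonneg fun a (ha : 0 ≤ a) => ?_
    refine mul_eq_zero_of_le_of_star_mul_mul_eq_zero (hΨ a ha) (map_le_norm_smul_map_one hΨ ha) ?_
    rw [mul_smul_comm, smul_mul_assoc, hr.star_eq, h, smul_zero]
  have hleft : LinearMap.mulLeft ℂ (1 - p) ∘ₗ Ψ = 0 := by
    refine LinearMap.ext_on CStarAlgebra.span_nonneg fun a (ha : 0 ≤ a) => ?_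
    simpa [star_mul, hr.star_eq, (IsSelfAdjoint.of_nonneg (hΨ a ha)).star_eq] using
      congr(star ($hright a))
  have hΨp := LinearMap.congr_fun hright a
  have hpΨ := LinearMap.congr_fun hleft a
  simp only [LinearMap.comp_apply, LinearMap.mulRight_apply, LinearMap.mulLeft_apply,
    LinearMap.zero_apply, mul_sub, sub_mul, mul_one, one_mul, sub_eq_zero] at hΨp hpΨ
  rw [← hpΨ, ← hΨp]

end PositiveMap

lemma Matrix.posSemidef_of_forall_dotProduct_mulVec_nonneg {ι : Type*} [Fintype ι]
    [DecidableEq ι] {X : Matrix ι ι ℂ} (h : ∀ v, 0 ≤ star v ⬝ᵥ (X *ᵥ v)) : X.PosSemidef := by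
  rw [← isPositive_toEuclideanLin_iff, LinearMap.isPositive_iff_complex]
  intro v
  obtain ⟨hre, him⟩ := Complex.nonneg_iff.mp (h v.ofLp)
  have hconj : v.ofLp ⬝ᵥ star (X *ᵥ v.ofLp) = star (star v.ofLp ⬝ᵥ (X *ᵥ v.ofLp)) := by
    rw [Matrix.star_dotProduct, star_star, dotProduct_comm]
  rw [EuclideanSpace.inner_eq_star_dotProduct, toLpLin_apply, WithLp.ofLp_toLp, hconj]
  refine ⟨Complex.ext ?_ ?_, ?_⟩ <;> simp [← him, hre]

namespace CStarNP

section CStarAlgebra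

variable {A B C : Type*} [CStarAlgebra A] [PartialOrder A]
  [CStarAlgebra B] [PartialOrder B] [StarOrderedRing B]
  [CStarAlgebra C] [PartialOrder C] [StarOrderedRing C]

lemma comp_map_tmul_nonneg {ω : (B ⊗[ℂ] C) →ₗ[ℂ] ℂ} (hω : ∀ z ∈ algPos B C, 0 ≤ ω z)
    {Φ : A →ₗ[ℂ] B} (hΦ : ∀ a, 0 ≤ a → 0 ≤ Φ a) {a : A} (ha : 0 ≤ a) {c : C} (hc : 0 ≤ c) :
    0 ≤ (ω ∘ₗ TensorProduct.map Φ LinearMap.id) (a ⊗ₜ[ℂ] c) := by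
  obtain ⟨b, hb⟩ := CStarAlgebra.nonneg_iff_eq_star_mul_self.mp (hΦ a ha)
  obtain ⟨c, rfl⟩ := CStarAlgebra.nonneg_iff_eq_star_mul_self.mp hc
  simpa [hb] using hω _ ⟨1, ![b], ![c], by simp⟩

variable [StarOrderedRing A]

lemma mem_maxTensorStates_iff {ρ : (A ⊗[ℂ] B) →ₗ[ℂ] ℂ} :
    ρ ∈ maxTensorStates A B ↔ ρ 1 = 1 ∧ ∀ a b, 0 ≤ a → 0 ≤ b → 0 ≤ ρ (a ⊗ₜ[ℂ] b) := by
  refine and_congr_right fun _ => ⟨fun h a b ha hb => ?_, fun h a b => ?_⟩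
  · obtain ⟨a, rfl⟩ := CStarAlgebra.nonneg_iff_eq_star_mul_self.mp ha
    obtain ⟨b, rfl⟩ := CStarAlgebra.nonneg_iff_eq_star_mul_self.mp hb
    exact h a b
  · exact h _ _ (star_mul_self_nonneg a) (star_mul_self_nonneg b)

lemma comp_map_mem_maxTensorStates {ω : (B ⊗[ℂ] C) →ₗ[ℂ] ℂ} (hω : ω ∈ algStates B C)
    {Φ : A →ₗ[ℂ] B} (hΦ : ∀ a, 0 ≤ a → 0 ≤ Φ a) (hΦ₁ : Φ 1 = 1) :
    ω ∘ₗ TensorProduct.map Φ LinearMap.id ∈ maxTensorStates A C := by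
  refine mem_maxTensorStates_iff.mpr ⟨?_, fun a c ha hc => comp_map_tmul_nonneg hω.2 hΦ ha hc⟩
  simpa [Algebra.TensorProduct.one_def, hΦ₁] using hω.1

lemma exists_eq_star_mul_map_mul_of_unital {Ψ : A →ₗ[ℂ] B} (hΨ : ∀ a, 0 ≤ a → 0 ≤ Ψ a)
    (hfin : (spectrum ℝ (Ψ 1)).Finite) {σ : A →ₗ[ℂ] ℂ} (hσ : σ ∈ states A) :
    ∃ (c : B) (Φ : A →ₗ[ℂ] B), (∀ a, 0 ≤ a → 0 ≤ Φ a) ∧ Φ 1 = 1 ∧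
      ∀ a, Ψ a = star c * Φ a * c := by
  have hq : 0 ≤ Ψ 1 := hΨ 1 zero_le_one
  have hc_fin : (spectrum ℝ (CFC.sqrt (Ψ 1))).Finite := by
    rw [CFC.sqrt_eq_real_sqrt _ hq, cfcₙ_eq_cfc, cfc_map_spectrum _ _]
    exact hfin.image _
  set c := CFC.sqrt (Ψ 1)
  have hc : IsSelfAdjoint c := (CFC.sqrt_nonneg _).isSelfAdjoint
  have hcc : c * c = Ψ 1 := CFC.sqrt_mul_sqrt_self _
  obtain ⟨d, hd, hcd, hcdc⟩ := hc.exists_pseudoInverse hc_fin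
  have hp : IsStarProjection (c * d) :=
    ⟨by rw [IsIdempotentElem, ← mul_assoc, hcdc], by
      rw [IsSelfAdjoint, star_mul, hc.star_eq, hd.star_eq, hcd]⟩
  have hcp : c * (1 - c * d) = 0 := by
    rw [mul_sub, mul_one, hcd, ← mul_assoc, hcdc, sub_self]
  have hsupp : (1 - c * d) * Ψ 1 * (1 - c * d) = 0 := by
    rw [← hcc, ← mul_assoc, mul_assoc _ c, hcp, mul_zero]
  have hσ_nonneg : ∀ a, 0 ≤ a → 0 ≤ σ a := fun a ha => by
    obtain ⟨b, rfl⟩ := CStarAlgebra.nonneg_iff_eq_star_mul_self.mp ha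
    exact hσ.2 b
  refine ⟨c, LinearMap.mulLeft ℂ d ∘ₗ LinearMap.mulRight ℂ d ∘ₗ Ψ + σ.smulRight (1 - c * d),
    fun a ha => ?_, ?_, fun a => ?_⟩ <;>
  simp only [LinearMap.add_apply, LinearMap.comp_apply, LinearMap.mulLeft_apply,
    LinearMap.mulRight_apply, LinearMap.smulRight_apply]
  · rw [← mul_assoc]
    exact add_nonneg (hd.conjugate_nonneg (hΨ a ha))
      (smul_nonneg (hσ_nonneg a ha) hp.one_sub.nonneg)
  · rw [hσ.1, one_smul, ← hcc, show d * (c * c * d) = d * c * (c * d) by simp only [mul_assoc],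
      ← hcd, hp.isIdempotentElem.eq, add_sub_cancel]
  · rw [hc.star_eq, mul_add, add_mul, mul_smul_comm, smul_mul_assoc, hcp, zero_mul, smul_zero,
      add_zero, show c * (d * (Ψ a * d)) * c = c * d * Ψ a * (d * c) by simp only [mul_assoc],
      ← hcd, IsStarProjection.mul_map_mul_eq hΨ hp hsupp]

end CStarAlgebra

section Kronecker

variable {ι κ : Type*} [Fintype ι] [DecidableEq ι] [Fintype κ] [DecidableEq κ]

noncomputable def vectorFunctional (η : ι × κ → ℂ) :
    (Matrix ι ι ℂ ⊗[ℂ] Matrix κ κ ℂ) →ₗ[ℂ] ℂ where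
  toFun z := star η ⬝ᵥ (kroneckerLinearEquiv ι ι κ κ ℂ z *ᵥ η)
  map_add' z w := by simp [add_mulVec]
  map_smul' c z := by simp [smul_mulVec]

lemma vectorFunctional_apply (η : ι × κ → ℂ) (z : Matrix ι ι ℂ ⊗[ℂ] Matrix κ κ ℂ) :
    vectorFunctional η z = star η ⬝ᵥ (kroneckerLinearEquiv ι ι κ κ ℂ z *ᵥ η) :=
  rfl

lemma vectorFunctional_kronecker_mulVec_tmul (c x : Matrix ι ι ℂ) (d y : Matrix κ κ ℂ)
    (η : ι × κ → ℂ) :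
    vectorFunctional ((c ⊗ₖ d) *ᵥ η) (x ⊗ₜ[ℂ] y) =
      vectorFunctional η ((star c * x * c) ⊗ₜ[ℂ] (star d * y * d)) := by
  simp only [vectorFunctional_apply, kroneckerLinearEquiv_tmul, star_mulVec, mulVec_mulVec,
    dotProduct_mulVec, vecMul_vecMul, ← mul_kronecker_mul, conjTranspose_kronecker,
    star_eq_conjTranspose, Matrix.mul_assoc]

lemma vectorFunctional_nonneg (η : ι × κ → ℂ) {z : Matrix ι ι ℂ ⊗[ℂ] Matrix κ κ ℂ}
    (hz : z ∈ algPos (Matrix ι ι ℂ) (Matrix κ κ ℂ)) : 0 ≤ vectorFunctional η z := by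
  obtain ⟨N, a, b, rfl⟩ := hz
  have hkron :
      kroneckerLinearEquiv ι ι κ κ ℂ (∑ i, ∑ j, (star (a i) * a j) ⊗ₜ[ℂ] (star (b i) * b j)) =
        (∑ i, a i ⊗ₖ b i)ᴴ * ∑ j, a j ⊗ₖ b j := by
    simp only [map_sum, kroneckerLinearEquiv_tmul, ← mul_kronecker_mul, conjTranspose_sum,
      conjTranspose_kronecker, star_eq_conjTranspose, Finset.sum_mul, Finset.mul_sum]
    exact Finset.sum_comm
  rw [vectorFunctional_apply, hkron]
  exact (posSemidef_conjTranspose_mul_self _).dotProduct_mulVec_nonneg η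

end Kronecker

section MaxEntangled

variable {m : ℕ}

def maxEntangledVector (ι : Type*) [DecidableEq ι] : ι × ι → ℂ :=
  fun p => if p.1 = p.2 then 1 else 0

lemma maxEntangledState_tmul (x y : Matrix (Fin m) (Fin m) ℂ) :
    maxEntangledState m (x ⊗ₜ[ℂ] y) = (m : ℂ)⁻¹ * ∑ i, ∑ j, x i j * y i j := by
  simp only [maxEntangledState, prodFunctional, entryFn, LinearMap.smul_apply, LinearMap.coe_sum,
    LinearMap.coe_comp, LinearEquiv.coe_coe, Finset.sum_apply, Function.comp_apply,
    TensorProduct.map_tmul, LinearMap.coe_mk, TensorProduct.lid_tmul, smul_eq_mul, Finset.mul_sum]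
  rfl

lemma maxEntangledState_tmul_one (x : Matrix (Fin m) (Fin m) ℂ) :
    maxEntangledState m (x ⊗ₜ[ℂ] 1) = (m : ℂ)⁻¹ * x.trace := by
  simp [maxEntangledState_tmul, one_apply, trace]

lemma maxEntangledState_eq_smul_vectorFunctional :
    maxEntangledState m = (m : ℂ)⁻¹ • vectorFunctional (maxEntangledVector (Fin m)) := by
  refine TensorProduct.ext' fun x y => ?_
  simp [maxEntangledState_tmul, vectorFunctional_apply, kroneckerLinearEquiv_tmul,
    maxEntangledVector, dotProduct, mulVec, Fintype.sum_prod_type]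

lemma inv_natCast_smul_vectorFunctional_nonneg (η : Fin m × Fin m → ℂ)
    {z : Matrix (Fin m) (Fin m) ℂ ⊗[ℂ] Matrix (Fin m) (Fin m) ℂ}
    (hz : z ∈ algPos (Matrix (Fin m) (Fin m) ℂ) (Matrix (Fin m) (Fin m) ℂ)) :
    0 ≤ ((m : ℂ)⁻¹ • vectorFunctional η) z := by
  rw [LinearMap.smul_apply]
  exact smul_nonneg (by positivity) (vectorFunctional_nonneg η hz)

variable {A : Type*} [AddCommGroup A] [Module ℂ A]

noncomputable def mapOfFunctional (m : ℕ) (ρ : (A ⊗[ℂ] Matrix (Fin m) (Fin m) ℂ) →ₗ[ℂ] ℂ) :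
    A →ₗ[ℂ] Matrix (Fin m) (Fin m) ℂ :=
  (m : ℂ) • (ofLinearEquiv ℂ).toLinearMap ∘ₗ LinearMap.pi fun i => LinearMap.pi fun j =>
    ρ ∘ₗ (TensorProduct.mk ℂ A _).flip (single i j 1)

lemma mapOfFunctional_apply (ρ : (A ⊗[ℂ] Matrix (Fin m) (Fin m) ℂ) →ₗ[ℂ] ℂ) (a : A)
    (i j : Fin m) : mapOfFunctional m ρ a i j = m * ρ (a ⊗ₜ[ℂ] single i j 1) :=
  rfl

lemma map_tmul_eq_sum (ρ : (A ⊗[ℂ] Matrix (Fin m) (Fin m) ℂ) →ₗ[ℂ] ℂ) (a : A)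
    (y : Matrix (Fin m) (Fin m) ℂ) :
    ρ (a ⊗ₜ[ℂ] y) = ∑ i, ∑ j, y i j * ρ (a ⊗ₜ[ℂ] single i j 1) := by
  conv_lhs => rw [matrix_eq_sum_single y]
  simp only [TensorProduct.tmul_sum, map_sum]
  refine Finset.sum_congr rfl fun i _ => Finset.sum_congr rfl fun j _ => ?_
  have hsingle : single i j (y i j) = y i j • single i j (1 : ℂ) := by
    rw [smul_single, smul_eq_mul, mul_one]
  rw [hsingle, TensorProduct.tmul_smul, map_smul, smul_eq_mul]

lemma maxEntangledState_comp_map_mapOfFunctional (hm : m ≠ 0)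
    (ρ : (A ⊗[ℂ] Matrix (Fin m) (Fin m) ℂ) →ₗ[ℂ] ℂ) :
    maxEntangledState m ∘ₗ TensorProduct.map (mapOfFunctional m ρ) LinearMap.id = ρ := by
  refine TensorProduct.ext' fun a y => ?_
  rw [LinearMap.comp_apply, TensorProduct.map_tmul, LinearMap.id_apply, maxEntangledState_tmul,
    map_tmul_eq_sum, Finset.mul_sum]
  simp only [mapOfFunctional_apply, Finset.mul_sum]
  have hm : (m : ℂ) ≠ 0 := Nat.cast_ne_zero.mpr hm
  exact Finset.sum_congr rfl fun i _ => Finset.sum_congr rfl fun j _ => by field_simp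

lemma mapOfFunctional_nonneg {ρ : (A ⊗[ℂ] Matrix (Fin m) (Fin m) ℂ) →ₗ[ℂ] ℂ} {a : A}
    (h : ∀ y, 0 ≤ y → 0 ≤ ρ (a ⊗ₜ[ℂ] y)) : 0 ≤ mapOfFunctional m ρ a := by
  refine nonneg_iff_posSemidef.mpr (posSemidef_of_forall_dotProduct_mulVec_nonneg fun v => ?_)
  have hv : star v ⬝ᵥ (mapOfFunctional m ρ a *ᵥ v) = m * ρ (a ⊗ₜ[ℂ] vecMulVec (star v) v) := by
    rw [map_tmul_eq_sum ρ a]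
    simp only [dotProduct, mulVec, mapOfFunctional_apply, vecMulVec_apply,
      Finset.mul_sum]
    exact Finset.sum_congr rfl fun i _ => Finset.sum_congr rfl fun j _ => by ring
  rw [hv]
  exact mul_nonneg (Nat.cast_nonneg' m) (h _ (posSemidef_vecMulVec_star_self v).nonneg)

section CStarAlgebra

variable {A : Type*} [CStarAlgebra A] [PartialOrder A] [StarOrderedRing A]

lemma exists_eq_maxEntangledState_comp_of_mem_maxTensorStates (hm : m ≠ 0)
    {ρ : (A ⊗[ℂ] Matrix (Fin m) (Fin m) ℂ) →ₗ[ℂ] ℂ}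
    (hρ : ρ ∈ maxTensorStates A (Matrix (Fin m) (Fin m) ℂ)) :
    ∃ Ψ : A →ₗ[ℂ] Matrix (Fin m) (Fin m) ℂ, (∀ a, 0 ≤ a → 0 ≤ Ψ a) ∧
      (m : ℂ)⁻¹ * (Ψ 1).trace = 1 ∧
        ρ = maxEntangledState m ∘ₗ TensorProduct.map Ψ LinearMap.id := by
  obtain ⟨hρ₁, hρ⟩ := mem_maxTensorStates_iff.mp hρ
  have hcomp := maxEntangledState_comp_map_mapOfFunctional hm ρ
  refine ⟨mapOfFunctional m ρ, fun a ha => mapOfFunctional_nonneg fun y hy => hρ a y ha hy, ?_,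
    hcomp.symm⟩
  calc (m : ℂ)⁻¹ * (mapOfFunctional m ρ 1).trace
      _ = maxEntangledState m (mapOfFunctional m ρ 1 ⊗ₜ[ℂ] 1) :=
        (maxEntangledState_tmul_one _).symm
      _ = ρ (1 ⊗ₜ[ℂ] 1) := congr($hcomp (1 ⊗ₜ[ℂ] 1))
      _ = 1 := by rw [← Algebra.TensorProduct.one_def, hρ₁]

lemma maxEntangledState_comp_map_mem_maxTensorStates {Φ : A →ₗ[ℂ] Matrix (Fin m) (Fin m) ℂ}
    (hΦ : ∀ a, 0 ≤ a → 0 ≤ Φ a) (htr : (m : ℂ)⁻¹ * (Φ 1).trace = 1) :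
    maxEntangledState m ∘ₗ TensorProduct.map Φ LinearMap.id ∈
      maxTensorStates A (Matrix (Fin m) (Fin m) ℂ) := by
  refine mem_maxTensorStates_iff.mpr ⟨?_, fun a y ha hy => comp_map_tmul_nonneg
    (fun z hz => ?_) hΦ ha hy⟩
  · simpa [Algebra.TensorProduct.one_def, maxEntangledState_tmul_one] using htr
  · rw [maxEntangledState_eq_smul_vectorFunctional]
    exact inv_natCast_smul_vectorFunctional_nonneg _ hz

lemma exists_eq_comp_map_unital_of_mem_maxTensorStates (hm : m ≠ 0) {σ : A →ₗ[ℂ] ℂ}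
    (hσ : σ ∈ states A) {ρ : (A ⊗[ℂ] Matrix (Fin m) (Fin m) ℂ) →ₗ[ℂ] ℂ}
    (hρ : ρ ∈ maxTensorStates A (Matrix (Fin m) (Fin m) ℂ)) :
    ∃ Φ : A →ₗ[ℂ] Matrix (Fin m) (Fin m) ℂ, (∀ a, 0 ≤ a → 0 ≤ Φ a) ∧ Φ 1 = 1 ∧
      ∃ ω ∈ algStates (Matrix (Fin m) (Fin m) ℂ) (Matrix (Fin m) (Fin m) ℂ),
        ρ = ω ∘ₗ TensorProduct.map Φ LinearMap.id := by
  obtain ⟨hρ₁, hρ⟩ := mem_maxTensorStates_iff.mp hρ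
  obtain ⟨c, Φ, hΦ, hΦ₁, hΨ⟩ := exists_eq_star_mul_map_mul_of_unital
    (fun a ha => mapOfFunctional_nonneg fun y hy => hρ a y ha hy) finite_real_spectrum hσ
  let ω := (m : ℂ)⁻¹ • vectorFunctional ((c ⊗ₖ (1 : Matrix (Fin m) (Fin m) ℂ)) *ᵥ
    maxEntangledVector (Fin m))
  have hωΦ : ω ∘ₗ TensorProduct.map Φ LinearMap.id = ρ := by
    conv_rhs => rw [← maxEntangledState_comp_map_mapOfFunctional hm ρ]
    refine TensorProduct.ext' fun a y => ?_
    simp only [ω, LinearMap.comp_apply, TensorProduct.map_tmul, LinearMap.id_apply,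
      LinearMap.smul_apply, vectorFunctional_kronecker_mulVec_tmul, star_one, one_mul, mul_one,
      ← hΨ, maxEntangledState_eq_smul_vectorFunctional]
  refine ⟨Φ, hΦ, hΦ₁, ω, ⟨?_, fun z hz => inv_natCast_smul_vectorFunctional_nonneg _ hz⟩,
    hωΦ.symm⟩
  calc ω 1 = ω (Φ 1 ⊗ₜ[ℂ] 1) := by rw [hΦ₁, Algebra.TensorProduct.one_def]
    _ = ρ (1 ⊗ₜ[ℂ] 1) := congr($hωΦ (1 ⊗ₜ[ℂ] 1))
    _ = 1 := by rw [← Algebra.TensorProduct.one_def, hρ₁]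

end CStarAlgebra

end MaxEntangled

lemma inv_card_smul_traceLinearMap_mem_states {ι : Type*} [Fintype ι] [DecidableEq ι]
    [Nonempty ι] :
    (Fintype.card ι : ℂ)⁻¹ • traceLinearMap ι ℂ ℂ ∈ states (Matrix ι ι ℂ) := by
  refine ⟨?_, fun a => ?_⟩
  · simp [trace_one]
  · rw [LinearMap.smul_apply, traceLinearMap_apply, smul_eq_mul, star_eq_conjTranspose]
    exact mul_nonneg (by positivity) (posSemidef_conjTranspose_mul_self a).trace_nonneg

end CStarNP

/-- For `n, m ≥ 2`, the maximal Namioka–Phelps tensor product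
`S(M_n(ℂ)) ⊗^* S(M_m(ℂ))` equals
`{ρ₀^(m) ∘ (Φ ⊗ id_m) : Φ : M_n(ℂ) → M_m(ℂ) positive, tr(Φ(I_n)) = 1}` and equals
`{ρ ∘ (Φ ⊗ id_m) : Φ : M_n(ℂ) → M_m(ℂ) unital positive, ρ a state on M_m(ℂ) ⊗ M_m(ℂ)}`,
where `tr` is the normalized trace. -/
theorem maxTensorStates_matrix (n m : ℕ) (hn : 2 ≤ n) (hm : 2 ≤ m) :
    CStarNP.maxTensorStates (Matrix (Fin n) (Fin n) ℂ) (Matrix (Fin m) (Fin m) ℂ) =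
      {ρ | ∃ Φ : Matrix (Fin n) (Fin n) ℂ →ₗ[ℂ] Matrix (Fin m) (Fin m) ℂ,
        (∀ M, M.PosSemidef → (Φ M).PosSemidef) ∧ (m : ℂ)⁻¹ * Matrix.trace (Φ 1) = 1 ∧
        ρ = CStarNP.maxEntangledState m ∘ₗ TensorProduct.map Φ LinearMap.id} ∧
    CStarNP.maxTensorStates (Matrix (Fin n) (Fin n) ℂ) (Matrix (Fin m) (Fin m) ℂ) =
      {ρ | ∃ Φ : Matrix (Fin n) (Fin n) ℂ →ₗ[ℂ] Matrix (Fin m) (Fin m) ℂ,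
        (∀ M, M.PosSemidef → (Φ M).PosSemidef) ∧ Φ 1 = 1 ∧
        ∃ ω ∈ CStarNP.algStates (Matrix (Fin m) (Fin m) ℂ) (Matrix (Fin m) (Fin m) ℂ),
          ρ = ω ∘ₗ TensorProduct.map Φ LinearMap.id} := by
  have : Nonempty (Fin n) := ⟨⟨0, by omega⟩⟩
  simp_rw [← Matrix.nonneg_iff_posSemidef]
  refine ⟨Set.ext fun ρ => ⟨CStarNP.exists_eq_maxEntangledState_comp_of_mem_maxTensorStates
      (by omega), ?_⟩, Set.ext fun ρ => ⟨CStarNP.exists_eq_comp_map_unital_of_mem_maxTensorStates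
      (by omega) CStarNP.inv_card_smul_traceLinearMap_mem_states, ?_⟩⟩
  · rintro ⟨Φ, hΦ, htr, rfl⟩
    exact CStarNP.maxEntangledState_comp_map_mem_maxTensorStates hΦ htr
  · rintro ⟨Φ, hΦ, hΦ₁, ω, hω, rfl⟩
    exact CStarNP.comp_map_mem_maxTensorStates hω hΦ hΦ₁
end

section
/- Let (A, P, u) and (A', P', u) be ordered real vector spaces with the same order unit u, where A ⊆ A' and P = P' ∩ A. Then every state on (A, P, u) extends to a state on (A', P', u). -/
/-! Since `u ∈ A` is an order unit of `A'`, every `y ∈ A'` is dominated by an element of `A`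
(`y + n • u ∈ P'`), so M. Riesz's extension theorem extends the positive functional `φ`
from `A` to a positive functional on `A'`; it still takes the value `1` at `u ∈ A`. -/

theorem PointedCone.exists_nonneg_extension_of_unit {E : Type*} [AddCommGroup E] [Module ℝ E]
    (s : PointedCone ℝ E) (p : Submodule ℝ E) (φ : p →ₗ[ℝ] ℝ)
    (hφ : ∀ x : p, (x : E) ∈ s → 0 ≤ φ x) {u : E} (hu : u ∈ p)
    (hunit : ∀ y, ∃ c : ℝ, y + c • u ∈ s) :
    ∃ ψ : E →ₗ[ℝ] ℝ, (∀ x : p, ψ x = φ x) ∧ ∀ x ∈ s, 0 ≤ ψ x := by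
  refine riesz_extension s ⟨p, φ⟩ hφ fun y => ?_
  obtain ⟨c, hc⟩ := hunit y
  exact ⟨⟨c • u, p.smul_mem c hu⟩, by rwa [add_comm]⟩

theorem state_extension_general
    {A' : Type*} [AddCommGroup A'] [Module ℝ A'] (P' : Set A') (Asub : Submodule ℝ A')
    (u : A')
    -- `P'` is a proper cone in `A'`:
    (hP'add : ∀ x ∈ P', ∀ y ∈ P', x + y ∈ P')
    (hP'smul : ∀ c : ℝ, 0 ≤ c → ∀ x ∈ P', c • x ∈ P')
    -- `u` is an order unit belonging to both `P` and `P'`: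
    (hu : u ∈ P') (huA : u ∈ Asub)
    (hOU' : ∀ x : A', ∃ n : ℕ, (n : ℝ) • u - x ∈ P' ∧ x + (n : ℝ) • u ∈ P')
    -- `φ` is a state on `(A, P, u)`:
    (φ : Asub →ₗ[ℝ] ℝ)
    (hφpos : ∀ x : Asub, (x : A') ∈ P' → 0 ≤ φ x)
    (hφu : φ ⟨u, huA⟩ = 1) :
    ∃ ψ : A' →ₗ[ℝ] ℝ, (∀ x ∈ P', 0 ≤ ψ x) ∧ ψ u = 1 ∧ ∀ x : Asub, ψ x = φ x := by
  let cone : PointedCone ℝ A' :=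
    { carrier := P'
      zero_mem' := by simpa using hP'smul 0 le_rfl u hu
      smul_mem' := fun c x hx => hP'smul c c.2 x hx
      add_mem' := fun {x y} hx hy => hP'add x hx y hy }
  have hunit : ∀ y, ∃ c : ℝ, y + c • u ∈ cone := fun y =>
    let ⟨n, _, hn⟩ := hOU' y
    ⟨n, hn⟩
  obtain ⟨ψ, hψφ, hψpos⟩ := cone.exists_nonneg_extension_of_unit Asub φ hφpos huA hunit
  exact ⟨ψ, hψpos, (hψφ ⟨u, huA⟩).trans hφu, hψφ⟩

/-- Let `(A, P, u)` and `(A', P', u)` be ordered real vector spaces with the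
same order unit `u`, where `A ⊆ A'` is a subspace and `P = P' ∩ A`. Then every state on
`(A, P, u)` extends to a state on `(A', P', u)`. -/
theorem state_extension
    {A' : Type*} [AddCommGroup A'] [Module ℝ A'] (P' : Set A') (Asub : Submodule ℝ A')
    (u : A')
    -- `P'` is a proper cone in `A'`:
    (hP'add : ∀ x ∈ P', ∀ y ∈ P', x + y ∈ P')
    (hP'smul : ∀ c : ℝ, 0 ≤ c → ∀ x ∈ P', c • x ∈ P')
    (hP'proper : ∀ x, x ∈ P' → -x ∈ P' → x = 0)
    (hP'gen : ∀ x : A', ∃ y ∈ P', ∃ z ∈ P', x = y - z)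
    -- `P = P' ∩ A` is a proper generating cone in `A`:
    (hPgen : ∀ x ∈ Asub, ∃ y ∈ P' ∩ Asub, ∃ z ∈ P' ∩ Asub, x = y - z)
    -- `u` is an order unit belonging to both `P` and `P'`:
    (hu : u ∈ P') (huA : u ∈ Asub)
    (hOU' : ∀ x : A', ∃ n : ℕ, (n : ℝ) • u - x ∈ P' ∧ x + (n : ℝ) • u ∈ P')
    -- `φ` is a state on `(A, P, u)`:
    (φ : Asub →ₗ[ℝ] ℝ)
    (hφpos : ∀ x : Asub, (x : A') ∈ P' → 0 ≤ φ x)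
    (hφu : φ ⟨u, huA⟩ = 1) :
    ∃ ψ : A' →ₗ[ℝ] ℝ, (∀ x ∈ P', 0 ≤ ψ x) ∧ ψ u = 1 ∧ ∀ x : Asub, ψ x = φ x :=
  state_extension_general P' Asub u hP'add hP'smul hu huA hOU' φ hφpos hφu
end

section
/- Let K₁ and K₂ be compact convex sets and let F₁ ⊆ K₁ and F₂ ⊆ K₂ be affinely independent subsets. Then the set F₁ ⊗ F₂ = {x₁ ⊗ x₂ : x₁ ∈ F₁, x₂ ∈ F₂} is affinely independent in K₁ ⊗_* K₂. -/
open scoped TensorProduct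

namespace ConvexNP

variable {E : Type*} [AddCommGroup E] [Module ℝ E] [TopologicalSpace E]

/-- The space `A(K)` of continuous affine real-valued functions on a subset `K` of a
topological vector space, as a submodule of `C(K, ℝ)`. -/
def affFns (K : Set E) : Submodule ℝ C(K, ℝ) where
  carrier := {f | ∀ (x y : K) (t : ℝ), 0 ≤ t → t ≤ 1 → ∀ z : K,
    (z : E) = t • (x : E) + (1 - t) • (y : E) → f z = t * f x + (1 - t) * f y}
  add_mem' := by
    intro _ _ hf hg x y t ht ht1 z hz
    simp only [ContinuousMap.add_apply]
    rw [hf x y t ht ht1 z hz, hg x y t ht ht1 z hz]; ring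
  zero_mem' := by
    intro x y t ht ht1 z hz
    simp
  smul_mem' := by
    intro _ _ hf x y t ht ht1 z hz
    simp only [ContinuousMap.smul_apply, smul_eq_mul]
    rw [hf x y t ht ht1 z hz]; ring

/-- Evaluation of affine functions at a point of `K`, as a linear functional on `A(K)`. -/
def evalAt (K : Set E) (x : K) : affFns K →ₗ[ℝ] ℝ where
  toFun f := (f : C(K, ℝ)) x
  map_add' _ _ := rfl
  map_smul' _ _ := rfl

/-- The constant function `1`, the order unit of `A(K)`. -/
def oneFn (K : Set E) : affFns K :=
  ⟨(1 : C(K, ℝ)), by intro x y t ht ht1 z hz; simp only [ContinuousMap.one_apply]; ring⟩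

variable {E₁ E₂ : Type*} [AddCommGroup E₁] [Module ℝ E₁] [TopologicalSpace E₁]
  [AddCommGroup E₂] [Module ℝ E₂] [TopologicalSpace E₂]

/-- The linear functional `x₁ ⊗ x₂` on `A(K₁) ⊗ A(K₂)` induced by a pair of points
`x₁ ∈ K₁, x₂ ∈ K₂`; it sends `f₁ ⊗ f₂` to `f₁(x₁) f₂(x₂)`. -/
noncomputable def elemTensor (K₁ : Set E₁) (K₂ : Set E₂) (x₁ : K₁) (x₂ : K₂) :
    (affFns K₁ ⊗[ℝ] affFns K₂) →ₗ[ℝ] ℝ :=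
  (TensorProduct.lid ℝ ℝ).toLinearMap ∘ₗ TensorProduct.map (evalAt K₁ x₁) (evalAt K₂ x₂)

/-- The "inner" cone in `A(K₁) ⊗ A(K₂)` generated by the elements `f₁ ⊗ f₂` with `fᵢ ≥ 0`. -/
def innerCone (K₁ : Set E₁) (K₂ : Set E₂) : Set (affFns K₁ ⊗[ℝ] affFns K₂) :=
  (AddSubmonoid.closure {h | ∃ f : affFns K₁, ∃ g : affFns K₂,
    (∀ x : K₁, 0 ≤ (f : C(K₁, ℝ)) x) ∧ (∀ y : K₂, 0 ≤ (g : C(K₂, ℝ)) y) ∧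
    h = f ⊗ₜ[ℝ] g} : Set (affFns K₁ ⊗[ℝ] affFns K₂))

/-- The "outer" cone in `A(K₁) ⊗ A(K₂)`: elements that are nonnegative when paired with any
`x₁ ⊗ x₂`, `xᵢ ∈ Kᵢ`. -/
def outerCone (K₁ : Set E₁) (K₂ : Set E₂) : Set (affFns K₁ ⊗[ℝ] affFns K₂) :=
  {h | ∀ (x₁ : K₁) (x₂ : K₂), 0 ≤ elemTensor K₁ K₂ x₁ x₂ h}

/-- The minimal Namioka–Phelps tensor product `K₁ ⊗_* K₂`, realized as a set of linear
functionals on `A(K₁) ⊗ A(K₂)` (with the weak* topology, i.e. the topology induced from the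
product topology on functions). -/
noncomputable def minTensor (K₁ : Set E₁) (K₂ : Set E₂) :
    Set ((affFns K₁ ⊗[ℝ] affFns K₂) → ℝ) :=
  {ω | IsLinearMap ℝ ω ∧ ω (oneFn K₁ ⊗ₜ[ℝ] oneFn K₂) = 1 ∧
    ∀ h ∈ outerCone K₁ K₂, 0 ≤ ω h}

/-- The maximal Namioka–Phelps tensor product `K₁ ⊗^* K₂`. -/
noncomputable def maxTensor (K₁ : Set E₁) (K₂ : Set E₂) :
    Set ((affFns K₁ ⊗[ℝ] affFns K₂) → ℝ) :=
  {ω | IsLinearMap ℝ ω ∧ ω (oneFn K₁ ⊗ₜ[ℝ] oneFn K₂) = 1 ∧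
    ∀ h ∈ innerCone K₁ K₂, 0 ≤ ω h}

/-- The Riesz interpolation property for the space `A(K)` of continuous affine functions on
`K`; by definition, `K` is a Choquet simplex iff this holds (for `K` compact convex). -/
def RieszInterpolation (K : Set E) : Prop :=
  ∀ a₁ a₂ b₁ b₂ : affFns K,
    (∀ x : K, (a₁ : C(K, ℝ)) x ≤ (b₁ : C(K, ℝ)) x) →
    (∀ x : K, (a₁ : C(K, ℝ)) x ≤ (b₂ : C(K, ℝ)) x) →
    (∀ x : K, (a₂ : C(K, ℝ)) x ≤ (b₁ : C(K, ℝ)) x) →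
    (∀ x : K, (a₂ : C(K, ℝ)) x ≤ (b₂ : C(K, ℝ)) x) →
    ∃ c : affFns K,
      (∀ x : K, (a₁ : C(K, ℝ)) x ≤ (c : C(K, ℝ)) x) ∧
      (∀ x : K, (a₂ : C(K, ℝ)) x ≤ (c : C(K, ℝ)) x) ∧
      (∀ x : K, (c : C(K, ℝ)) x ≤ (b₁ : C(K, ℝ)) x) ∧
      (∀ x : K, (c : C(K, ℝ)) x ≤ (b₂ : C(K, ℝ)) x)

/-- A compact convex set is *the Poulsen simplex* iff it is non-trivial, metrizable, and its
extreme points are dense (this determines it uniquely among Choquet simplexes). -/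
def IsPoulsen {V : Type*} [AddCommGroup V] [Module ℝ V] [TopologicalSpace V]
    (K : Set V) : Prop :=
  (∃ x ∈ K, ∃ y ∈ K, x ≠ y) ∧ TopologicalSpace.MetrizableSpace K ∧
    K ⊆ closure (Set.extremePoints ℝ K)

end ConvexNP

/-! Finitely many points of an affinely independent set in a space with separating dual can be
told apart by continuous affine functions: Hahn–Banach gives one that is `1` at a chosen point
and `0` at the others. The tensor product `f₁ ⊗ f₂` of two such functions is `1` on the chosen
`x₁ ⊗ x₂` and `0` on the other elementary tensors under consideration, so the elementary
tensors `x₁ ⊗ x₂` are even linearly independent. -/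

theorem SeparatingDual.exists_continuousLinearMap_apply_eq {R V ι : Type*} [Field R]
    [TopologicalSpace R] [IsTopologicalRing R] [AddCommGroup V] [Module R V] [TopologicalSpace V]
    [SeparatingDual R V] [Fintype ι] {v : ι → V} (hv : LinearIndependent R v) (c : ι → R) :
    ∃ φ : V →L[R] R, ∀ i, φ (v i) = c i := by
  classical
  obtain ⟨φ, hφ⟩ := (SeparatingDual.dualMap_surjective_iff.2
    hv.fintypeLinearCombination_injective) (Fintype.linearCombination R c)
  refine ⟨φ, fun i => ?_⟩
  simpa [Fintype.linearCombination_apply_single] using LinearMap.congr_fun hφ (Pi.single i 1)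

theorem AffineIndependent.exists_continuousAffineMap_apply_eq_ite {R V ι : Type*} [Field R]
    [TopologicalSpace R] [IsTopologicalRing R] [AddCommGroup V] [Module R V] [TopologicalSpace V]
    [SeparatingDual R V] [DecidableEq ι] {p : ι → V}
    (hp : AffineIndependent R p) (s : Finset ι) (i : ι) :
    ∃ φ : V →ᴬ[R] R, ∀ j ∈ s, φ (p j) = if j = i then 1 else 0 := by
  have hv : LinearIndependent R (fun j : s.erase i => p j - p i) := by
    have := (affineIndependent_iff_linearIndependent_vsub R p i).1 hp
    exact this.comp (fun j : s.erase i => (⟨j.1, Finset.ne_of_mem_erase j.2⟩ : {x // x ≠ i}))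
      fun j k h => Subtype.ext (congrArg Subtype.val h :)
  obtain ⟨ψ, hψ⟩ := SeparatingDual.exists_continuousLinearMap_apply_eq hv (fun _ => -1)
  refine ⟨ψ.toContinuousAffineMap + ContinuousAffineMap.const R V (1 - ψ (p i)), fun j hj => ?_⟩
  simp only [ContinuousAffineMap.add_apply, ContinuousLinearMap.coe_toContinuousAffineMap,
    ContinuousAffineMap.coe_const, Function.const_apply]
  split_ifs with hji
  · rw [hji]; ring
  · have := hψ ⟨j, Finset.mem_erase.2 ⟨hji, hj⟩⟩
    rw [map_sub] at this
    linear_combination this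

theorem linearIndependent_of_forall_exists_apply_eq_ite {R M ι : Type*} [CommRing R]
    [AddCommMonoid M] [Module R M] [DecidableEq ι] {ω : ι → M →ₗ[R] R}
    (h : ∀ s : Finset ι, ∀ i ∈ s, ∃ m : M, ∀ j ∈ s, ω j m = if j = i then 1 else 0) :
    LinearIndependent R ω := by
  refine linearIndependent_iff'.2 fun s c hc i hi => ?_
  obtain ⟨m, hm⟩ := h s i hi
  have hcm : ∑ j ∈ s, c j * ω j m = 0 := by simpa using LinearMap.congr_fun hc m
  rwa [Finset.sum_congr rfl fun j hj => by rw [hm j hj, mul_ite, mul_one, mul_zero],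
    Finset.sum_ite_eq' s i, if_pos hi] at hcm

namespace ContinuousAffineMap

variable {E : Type*} [AddCommGroup E] [Module ℝ E] [TopologicalSpace E]

def toAffFns (φ : E →ᴬ[ℝ] ℝ) (K : Set E) : ConvexNP.affFns K :=
  ⟨(φ : C(E, ℝ)).restrict K, fun x y t _ _ z hz => by
    simpa [hz] using Convex.combo_affine_apply (f := φ.toAffineMap) (add_sub_cancel t 1)⟩

@[simp]
theorem toAffFns_apply (φ : E →ᴬ[ℝ] ℝ) (K : Set E) (x : K) :
    ((φ.toAffFns K : ConvexNP.affFns K) : C(K, ℝ)) x = φ x :=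
  rfl

end ContinuousAffineMap

namespace ConvexNP

variable {E₁ E₂ : Type*} [AddCommGroup E₁] [Module ℝ E₁] [TopologicalSpace E₁]
  [AddCommGroup E₂] [Module ℝ E₂] [TopologicalSpace E₂]

@[simp]
theorem elemTensor_tmul (K₁ : Set E₁) (K₂ : Set E₂) (x₁ : K₁) (x₂ : K₂) (f : affFns K₁)
    (g : affFns K₂) :
    elemTensor K₁ K₂ x₁ x₂ (f ⊗ₜ g) = (f : C(K₁, ℝ)) x₁ * (g : C(K₂, ℝ)) x₂ :=
  rfl

theorem linearIndependent_elemTensor [SeparatingDual ℝ E₁] [SeparatingDual ℝ E₂] {K₁ : Set E₁} {K₂ : Set E₂}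
    {ι₁ ι₂ : Type*} {p₁ : ι₁ → K₁} {p₂ : ι₂ → K₂}
    (h₁ : AffineIndependent ℝ fun i => (p₁ i : E₁))
    (h₂ : AffineIndependent ℝ fun i => (p₂ i : E₂)) :
    LinearIndependent ℝ fun i : ι₁ × ι₂ => elemTensor K₁ K₂ (p₁ i.1) (p₂ i.2) := by
  classical
  refine linearIndependent_of_forall_exists_apply_eq_ite fun s i _ => ?_
  obtain ⟨φ₁, hφ₁⟩ := h₁.exists_continuousAffineMap_apply_eq_ite (s.image Prod.fst) i.1
  obtain ⟨φ₂, hφ₂⟩ := h₂.exists_continuousAffineMap_apply_eq_ite (s.image Prod.snd) i.2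
  refine ⟨φ₁.toAffFns K₁ ⊗ₜ φ₂.toAffFns K₂, fun j hj => ?_⟩
  rw [elemTensor_tmul, ContinuousAffineMap.toAffFns_apply, ContinuousAffineMap.toAffFns_apply,
    hφ₁ _ (Finset.mem_image_of_mem _ hj), hφ₂ _ (Finset.mem_image_of_mem _ hj),
    ite_zero_mul_ite_zero, mul_one]
  exact if_congr Prod.ext_iff.symm rfl rfl

end ConvexNP

theorem elemTensor_affineIndependent_general
    {E₁ E₂ : Type*} [AddCommGroup E₁] [Module ℝ E₁] [TopologicalSpace E₁]
    [IsTopologicalAddGroup E₁] [ContinuousSMul ℝ E₁] [LocallyConvexSpace ℝ E₁] [T2Space E₁]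
    [AddCommGroup E₂] [Module ℝ E₂] [TopologicalSpace E₂]
    [IsTopologicalAddGroup E₂] [ContinuousSMul ℝ E₂] [LocallyConvexSpace ℝ E₂] [T2Space E₂]
    (K₁ : Set E₁) (K₂ : Set E₂)
    (F₁ : Set E₁) (F₂ : Set E₂)
    (hF₁ind : AffineIndependent ℝ ((↑) : F₁ → E₁))
    (hF₂ind : AffineIndependent ℝ ((↑) : F₂ → E₂)) :
    AffineIndependent ℝ
      ((↑) : {ω : (ConvexNP.affFns K₁ ⊗[ℝ] ConvexNP.affFns K₂) →ₗ[ℝ] ℝ |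
          ∃ (x₁ : K₁) (x₂ : K₂), (x₁ : E₁) ∈ F₁ ∧ (x₂ : E₂) ∈ F₂ ∧
            ω = ConvexNP.elemTensor K₁ K₂ x₁ x₂} →
        ((ConvexNP.affFns K₁ ⊗[ℝ] ConvexNP.affFns K₂) →ₗ[ℝ] ℝ)) := by
  have hrange : {ω | ∃ (x₁ : K₁) (x₂ : K₂), (x₁ : E₁) ∈ F₁ ∧ (x₂ : E₂) ∈ F₂ ∧
      ω = ConvexNP.elemTensor K₁ K₂ x₁ x₂} =
      Set.range fun x : {x : K₁ // (x : E₁) ∈ F₁} × {x : K₂ // (x : E₂) ∈ F₂} =>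
        ConvexNP.elemTensor K₁ K₂ x.1 x.2 := by
    ext ω
    simp [eq_comm]
  rw [hrange]
  refine (ConvexNP.linearIndependent_elemTensor ?_ ?_).affineIndependent.range
  · exact hF₁ind.comp_embedding
      (⟨fun x => ⟨x.1, x.2⟩, fun x y h => by ext; simpa using h⟩ : {x : K₁ // (x : E₁) ∈ F₁} ↪ F₁)
  · exact hF₂ind.comp_embedding
      (⟨fun x => ⟨x.1, x.2⟩, fun x y h => by ext; simpa using h⟩ : {x : K₂ // (x : E₂) ∈ F₂} ↪ F₂)

/-- Let `K₁` and `K₂` be compact convex sets (in Hausdorff locally convex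
topological vector spaces) and let `F₁ ⊆ K₁` and `F₂ ⊆ K₂` be affinely independent subsets.
Then `F₁ ⊗ F₂ = {x₁ ⊗ x₂ : x₁ ∈ F₁, x₂ ∈ F₂}` is affinely independent in `K₁ ⊗_* K₂`. -/
theorem elemTensor_affineIndependent
    {E₁ E₂ : Type*} [AddCommGroup E₁] [Module ℝ E₁] [TopologicalSpace E₁]
    [IsTopologicalAddGroup E₁] [ContinuousSMul ℝ E₁] [LocallyConvexSpace ℝ E₁] [T2Space E₁]
    [AddCommGroup E₂] [Module ℝ E₂] [TopologicalSpace E₂]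
    [IsTopologicalAddGroup E₂] [ContinuousSMul ℝ E₂] [LocallyConvexSpace ℝ E₂] [T2Space E₂]
    (K₁ : Set E₁) (K₂ : Set E₂)
    (hK₁c : IsCompact K₁) (hK₁conv : Convex ℝ K₁)
    (hK₂c : IsCompact K₂) (hK₂conv : Convex ℝ K₂)
    (F₁ : Set E₁) (F₂ : Set E₂) (hF₁ : F₁ ⊆ K₁) (hF₂ : F₂ ⊆ K₂)
    (hF₁ind : AffineIndependent ℝ ((↑) : F₁ → E₁))
    (hF₂ind : AffineIndependent ℝ ((↑) : F₂ → E₂)) :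
    AffineIndependent ℝ
      ((↑) : {ω : (ConvexNP.affFns K₁ ⊗[ℝ] ConvexNP.affFns K₂) →ₗ[ℝ] ℝ |
          ∃ (x₁ : K₁) (x₂ : K₂), (x₁ : E₁) ∈ F₁ ∧ (x₂ : E₂) ∈ F₂ ∧
            ω = ConvexNP.elemTensor K₁ K₂ x₁ x₂} →
        ((ConvexNP.affFns K₁ ⊗[ℝ] ConvexNP.affFns K₂) →ₗ[ℝ] ℝ)) :=
  elemTensor_affineIndependent_general K₁ K₂ F₁ F₂ hF₁ind hF₂ind
end

section
/- If A is a non-commutative C*-algebra, then the ordered real vector space A_sa of self-adjoint elements of A, with the usual C*-algebra order, does not satisfy the Riesz interpolation property: there exist self-adjoint elements a₁, a₂, b₁, b₂ in A with aᵢ ≤ b_j for i, j ∈ {1,2}, for which no self-adjoint c ∈ A satisfies aᵢ ≤ c ≤ b_j for all i, j ∈ {1,2}. -/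
/-!
If `A` contains `x ≠ 0` with `x * x = 0`, normalised to `‖x‖ = 1`, then `x` behaves like the matrix
unit `E₁₂` of `M₂(ℂ)`: with `e = x⋆x` and `f = xx⋆`, both `0` and a suitable `a` lie below `f²` and
`½ (x + e)(x + e)⋆`, the analogues of two distinct rank-one projections. An interpolating `c` would
satisfy `‖c‖² ≤ ‖f · ½ (x + e)(x + e)⋆ · f‖ ≤ 1/2`, while compressing `a ≤ c` by `x + (2/5) e`
gives `‖c‖ ≥ 91/116`.

Otherwise `A` has no nonzero square-zero elements. Then `φ(s) t ψ(s) = 0` for self-adjoint `s`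
whenever `φ ψ = 0` on the spectrum of `s`, because this element squares to zero. On each piece of
a three-coloured partition of unity in `s`, a staircase function of `s` is constant and commutes
with `t`, and it differs from `s` by at most `1`. This gives `‖s t - t s‖ ≤ 6 ‖t‖`, and since the
hypothesis is invariant under `s ↦ n • s`, `s` commutes with `t`. So `A` is commutative.
-/

/-- The usual order on a C*-algebra: `x ≤ y` iff `y - x` is positive, i.e. `y - x = c* c`
for some `c`. -/
def CStarLe {A : Type*} [NonUnitalCStarAlgebra A] (x y : A) : Prop :=
  ∃ c : A, y - x = star c * c

open Finset

namespace PiecewiseLinear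

noncomputable section

def ramp (a τ : ℝ) : ℝ := max 0 (min 1 (τ - a))

def tent (a : ℝ) : ℝ → ℝ := ramp a - ramp (a + 1)

def comb (b : ℝ) (m : ℕ) : ℝ → ℝ := ∑ j ∈ range m, tent (b + 3 * j)

-- The ramp sum counts the tents of `comb b m` left of `τ`, so on the tent `tent (b + 3 * j)` the
-- clamped term is `τ` minus its centre `b + 3 * j + 1`.
def staircase (b : ℝ) (m : ℕ) (τ : ℝ) : ℝ :=
  τ - max (-1) (min 1 (τ - (b + 1) - 3 * ∑ i ∈ range m, ramp (b + 3 * i + 2) τ))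

end

lemma ramp_of_le {a τ : ℝ} (h : τ ≤ a) : ramp a τ = 0 := by
  simp [ramp, h]

lemma ramp_of_ge {a τ : ℝ} (h : a + 1 ≤ τ) : ramp a τ = 1 := by
  unfold ramp; rw [min_eq_left (by linarith)]; simp

@[fun_prop]
lemma continuous_ramp (a : ℝ) : Continuous (ramp a) := by
  unfold ramp; fun_prop

lemma ramp_antitone {τ : ℝ} : Antitone (ramp · τ) := fun _ _ h =>
  max_le_max le_rfl (min_le_min le_rfl (by linarith))

lemma ramp_nonneg (a τ : ℝ) : 0 ≤ ramp a τ := le_max_left _ _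

lemma ramp_le_one (a τ : ℝ) : ramp a τ ≤ 1 := max_le zero_le_one (min_le_left _ _)

lemma tent_apply (a τ : ℝ) : tent a τ = ramp a τ - ramp (a + 1) τ := rfl

@[fun_prop]
lemma continuous_tent (a : ℝ) : Continuous (tent a) := by
  unfold tent; fun_prop

lemma tent_nonneg (a τ : ℝ) : 0 ≤ tent a τ :=
  sub_nonneg.2 (ramp_antitone (by linarith))

lemma mem_Ioo_of_tent_ne_zero {a τ : ℝ} (h : tent a τ ≠ 0) : τ ∈ Set.Ioo a (a + 2) := by
  rw [tent_apply] at h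
  constructor
  · by_contra! hτ
    rw [ramp_of_le hτ, ramp_of_le (by linarith), sub_self] at h; exact h rfl
  · by_contra! hτ
    rw [ramp_of_ge (by linarith), ramp_of_ge (by linarith), sub_self] at h; exact h rfl

lemma comb_apply (b : ℝ) (m : ℕ) (τ : ℝ) :
    comb b m τ = ∑ j ∈ range m, tent (b + 3 * j) τ := by
  simp [comb]

@[fun_prop]
lemma continuous_comb (b : ℝ) (m : ℕ) : Continuous (comb b m) := by
  rw [show comb b m = fun τ => ∑ j ∈ range m, tent (b + 3 * j) τ from funext (comb_apply b m)]
  fun_prop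

lemma comb_nonneg (b : ℝ) (m : ℕ) (τ : ℝ) : 0 ≤ comb b m τ := by
  rw [comb_apply]; exact sum_nonneg fun j _ => tent_nonneg _ _

lemma sum_comb (b : ℝ) (m : ℕ) (τ : ℝ) :
    ∑ r ∈ range 3, comb (b + r) m τ = ramp b τ - ramp (b + 3 * m) τ := by
  simp only [comb_apply]
  rw [sum_comm]
  have := sum_range_sub' (fun j : ℕ => ramp (b + 3 * j) τ) m
  simp only [Nat.cast_zero, mul_zero, add_zero] at this
  rw [← this]
  refine sum_congr rfl fun j _ => ?_
  simp only [sum_range_succ, sum_range_zero, tent_apply]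
  push_cast
  ring_nf

lemma comb_le_one (b : ℝ) (m : ℕ) (τ : ℝ) : comb b m τ ≤ 1 := by
  have h := sum_comb b m τ
  simp only [sum_range_succ, sum_range_zero, Nat.cast_zero, add_zero] at h
  have := comb_nonneg (b + 1) m τ
  have := comb_nonneg (b + 2) m τ
  have := ramp_le_one b τ
  have := ramp_nonneg (b + 3 * m) τ
  push_cast at h
  linarith

@[fun_prop]
lemma continuous_staircase (b : ℝ) (m : ℕ) : Continuous (staircase b m) := by
  unfold staircase; fun_prop

lemma abs_staircase_sub_le (b : ℝ) (m : ℕ) (τ : ℝ) : |staircase b m τ - τ| ≤ 1 := by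
  rw [staircase, sub_sub_cancel_left, abs_neg, abs_le]
  exact ⟨le_max_left _ _, max_le (by norm_num) (min_le_left _ _)⟩

lemma staircase_eq {b : ℝ} {m j : ℕ} (hj : j < m) {τ : ℝ} (hτ : tent (b + 3 * j) τ ≠ 0) :
    staircase b m τ = b + 3 * j + 1 := by
  obtain ⟨h₁, h₂⟩ := mem_Ioo_of_tent_ne_zero hτ
  have hsum : ∑ i ∈ range m, ramp (b + 3 * i + 2) τ = j := by
    obtain ⟨k, rfl⟩ := Nat.exists_eq_add_of_le hj.le
    have hlow : ∀ i ∈ range j, ramp (b + 3 * i + 2) τ = 1 := fun i hi => by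
      have : (i : ℝ) + 1 ≤ j := by exact_mod_cast mem_range.1 hi
      exact ramp_of_ge (by linarith)
    have hhigh : ∀ i ∈ range k, ramp (b + 3 * ↑(j + i) + 2) τ = 0 := fun i _ =>
      ramp_of_le (by push_cast; linarith [(i.cast_nonneg : (0 : ℝ) ≤ i)])
    rw [sum_range_add, sum_congr rfl hlow, sum_congr rfl hhigh]
    simp
  rw [staircase, hsum, min_eq_right (by linarith), max_eq_right (by linarith)]
  ring

end PiecewiseLinear

lemma norm_commutator_mul_le {R : Type*} [NonUnitalNormedRing R] {x y t u : R}
    (h : (y * t - t * y) * u = 0) : ‖(x * t - t * x) * u‖ ≤ 2 * ‖x - y‖ * ‖t‖ * ‖u‖ := by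
  have key : (x * t - t * x) * u = (x - y) * t * u - t * ((x - y) * u) + (y * t - t * y) * u := by
    noncomm_ring
  rw [key, h, add_zero]
  calc _ ≤ ‖(x - y) * t * u‖ + ‖t * ((x - y) * u)‖ := norm_sub_le _ _
    _ ≤ ‖x - y‖ * ‖t‖ * ‖u‖ + ‖t‖ * (‖x - y‖ * ‖u‖) := by
      gcongr
      · exact (norm_mul_le _ _).trans (by gcongr; exact norm_mul_le _ _)
      · exact (norm_mul_le _ _).trans (by gcongr; exact norm_mul_le _ _)
    _ = 2 * ‖x - y‖ * ‖t‖ * ‖u‖ := by ring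

section SpectrallyLocal

open PiecewiseLinear

variable {B : Type*} [CStarAlgebra B]

def IsSpectrallyLocal (s t : B) : Prop :=
  ∀ f g : ℝ → ℝ, Continuous f → Continuous g → (∀ τ ∈ spectrum ℝ s, f τ * g τ = 0) →
    cfc f s * t * cfc g s = 0

variable {s t : B}

lemma IsSpectrallyLocal.smul (h : IsSpectrallyLocal s t) (hs : IsSelfAdjoint s) (r : ℝ) :
    IsSpectrallyLocal (r • s) t := by
  intro f g hf hg hfg
  rw [← cfc_comp_smul r f s, ← cfc_comp_smul r g s]
  refine h _ _ (by fun_prop) (by fun_prop) fun τ hτ => hfg _ ?_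
  rw [← cfc_const_mul_id r s, cfc_map_spectrum (r * ·) s]
  exact ⟨τ, hτ, rfl⟩

lemma IsSpectrallyLocal.commutator_mul_cfc_sum_eq_zero (h : IsSpectrallyLocal s t)
    (hs : IsSelfAdjoint s) {f : ℝ → ℝ} (hf : Continuous f) {ι : Type*} (F : Finset ι)
    {g : ι → ℝ → ℝ} (hg : ∀ i, Continuous (g i)) (c : ι → ℝ)
    (hfg : ∀ i ∈ F, ∀ τ, g i τ ≠ 0 → f τ = c i) :
    (cfc f s * t - t * cfc f s) * cfc (∑ i ∈ F, g i) s = 0 := by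
  rw [cfc_sum g s F (fun i _ => (hg i).continuousOn), mul_sum]
  refine sum_eq_zero fun i hi => ?_
  have hpiece : ∀ τ, (f τ - c i) * g i τ = 0 := fun τ => by
    by_cases hτ : g i τ = 0
    · rw [hτ, mul_zero]
    · rw [hfg i hi τ hτ, sub_self, zero_mul]
  have hleft : cfc f s * t * cfc (g i) s = c i • (t * cfc (g i) s) := by
    have := h (fun τ => f τ - c i) (g i) (by fun_prop) (hg i) fun τ _ => hpiece τ
    rwa [cfc_sub _ _ s, cfc_const (c i) s, Algebra.algebraMap_eq_smul_one, sub_mul, sub_mul,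
      smul_mul_assoc, one_mul, smul_mul_assoc, sub_eq_zero] at this
  have hright : cfc f s * cfc (g i) s = c i • cfc (g i) s := by
    rw [← cfc_mul f (g i) s, ← cfc_smul (c i) (g i) s]
    exact cfc_congr fun τ _ => by
      have := hpiece τ
      simp only [smul_eq_mul]; linear_combination this
  rw [sub_mul, hleft, mul_assoc t, hright, mul_smul_comm, sub_self]

lemma sum_cfc_comb_eq_one (hs : IsSelfAdjoint s) {b : ℝ} {m : ℕ}
    (hspec : spectrum ℝ s ⊆ Set.Icc (b + 1) (b + 3 * m)) :
    ∑ r ∈ range 3, cfc (comb (b + r) m) s = 1 := by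
  rw [← cfc_sum _ _ _ (fun r _ => (continuous_comb _ _).continuousOn), ← cfc_one ℝ s]
  refine cfc_congr fun τ hτ => ?_
  rw [Finset.sum_apply, sum_comb, ramp_of_ge (hspec hτ).1, ramp_of_le (hspec hτ).2, sub_zero,
    Pi.one_apply]

lemma IsSpectrallyLocal.norm_commutator_mul_cfc_comb_le (h : IsSpectrallyLocal s t)
    (hs : IsSelfAdjoint s) (b : ℝ) (m : ℕ) :
    ‖(s * t - t * s) * cfc (comb b m) s‖ ≤ 2 * ‖t‖ := by
  have hflat := h.commutator_mul_cfc_sum_eq_zero hs (continuous_staircase b m) (range m)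
    (fun j => continuous_tent _) (fun j => b + 3 * j + 1)
    fun j hj τ hτ => staircase_eq (mem_range.1 hj) hτ
  have hdist : ‖s - cfc (staircase b m) s‖ ≤ 1 := by
    rw [show s - cfc (staircase b m) s = cfc (fun τ => τ - staircase b m τ) s by
      rw [cfc_sub (fun τ => τ) _ s, cfc_id' ℝ s]]
    refine norm_cfc_le zero_le_one fun τ _ => ?_
    rw [Real.norm_eq_abs, abs_sub_comm]
    exact abs_staircase_sub_le _ _ _
  have hcomb : ‖cfc (comb b m) s‖ ≤ 1 :=
    norm_cfc_le zero_le_one fun τ _ => by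
      rw [Real.norm_eq_abs, abs_of_nonneg (comb_nonneg _ _ _)]
      exact comb_le_one _ _ _
  calc _ ≤ 2 * ‖s - cfc (staircase b m) s‖ * ‖t‖ * ‖cfc (comb b m) s‖ :=
        norm_commutator_mul_le hflat
    _ ≤ 2 * 1 * ‖t‖ * 1 := by gcongr
    _ = 2 * ‖t‖ := by ring

lemma IsSpectrallyLocal.norm_commutator_le (h : IsSpectrallyLocal s t) (hs : IsSelfAdjoint s) :
    ‖s * t - t * s‖ ≤ 6 * ‖t‖ := by
  nontriviality B
  obtain ⟨N, hN⟩ := exists_nat_ge ‖s‖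
  have hspec : spectrum ℝ s ⊆ Set.Icc (-N - 1 + 1) (-N - 1 + 3 * (N + 1 : ℕ)) := fun τ hτ => by
    have := abs_le.1 ((Real.norm_eq_abs τ ▸ spectrum.norm_le_norm_of_mem hτ).trans hN)
    constructor <;> push_cast <;> linarith
  calc ‖s * t - t * s‖
      = ‖∑ r ∈ range 3, (s * t - t * s) * cfc (comb (-N - 1 + r) (N + 1)) s‖ := by
        rw [← mul_sum, sum_cfc_comb_eq_one hs hspec, mul_one]
    _ ≤ ∑ r ∈ range 3, 2 * ‖t‖ :=
        norm_sum_le_of_le _ fun r _ => h.norm_commutator_mul_cfc_comb_le hs _ _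
    _ = 6 * ‖t‖ := by rw [sum_const, card_range, nsmul_eq_mul]; ring

lemma IsSpectrallyLocal.commute (h : IsSpectrallyLocal s t) (hs : IsSelfAdjoint s) :
    Commute s t := by
  -- the hypothesis is invariant under `s ↦ n • s`, the bound `6 * ‖t‖` is not
  have hbound : ∀ n : ℕ, n * ‖s * t - t * s‖ ≤ 6 * ‖t‖ := fun n => by
    have := (h.smul hs n).norm_commutator_le ((IsSelfAdjoint.all _).smul hs)
    rwa [smul_mul_assoc, mul_smul_comm, ← smul_sub, norm_smul, Real.norm_natCast] at this
  by_contra hne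
  have hpos : 0 < ‖s * t - t * s‖ := norm_pos_iff.2 (sub_ne_zero.2 hne)
  obtain ⟨n, hn⟩ := exists_nat_gt (6 * ‖t‖ / ‖s * t - t * s‖)
  rw [div_lt_iff₀ hpos] at hn
  linarith [hbound n]

end SpectrallyLocal

open scoped CStarAlgebra ComplexStarModule

section SquareZero

variable {A : Type*} [NonUnitalCStarAlgebra A]

lemma isSpectrallyLocal_inr (hA : ∀ z : A, z * z = 0 → z = 0) (s t : A) :
    IsSpectrallyLocal (s : A⁺¹) (t : A⁺¹) := by
  intro f g hf hg hfg
  set z := cfc f (s : A⁺¹) * t * cfc g (s : A⁺¹)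
  have hgf : cfc g (s : A⁺¹) * cfc f (s : A⁺¹) = 0 := by
    rw [← cfc_mul g f (s : A⁺¹), ← cfc_zero ℝ (s : A⁺¹)]
    exact cfc_congr fun τ hτ => by rw [mul_comm]; exact hfg τ hτ
  have hzz : z * z = 0 := by
    calc z * z = cfc f (s : A⁺¹) * t * (cfc g (s : A⁺¹) * cfc f (s : A⁺¹)) * t
          * cfc g (s : A⁺¹) := by simp only [z]; noncomm_ring
      _ = 0 := by rw [hgf]; noncomm_ring
  -- `t` lies in the ideal `A`, hence so does `z`
  have hz : z = (z.snd : A⁺¹) := by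
    ext
    · simp [z]
    · simp
  have hsnd : z.snd * z.snd = 0 := Unitization.inr_injective (R := ℂ) <| by
    rw [Unitization.inr_mul, ← hz, hzz, Unitization.inr_zero]
  rw [hz, hA _ hsnd, Unitization.inr_zero]

lemma commute_of_forall_mul_self_eq_zero (hA : ∀ z : A, z * z = 0 → z = 0) (u v : A) :
    Commute u v := by
  have hsa : ∀ s : A, IsSelfAdjoint s → Commute s v := fun s hs => by
    have := (isSpectrallyLocal_inr hA s v).commute (hs.inr ℂ)
    exact Unitization.inr_injective (R := ℂ) (by simpa [Unitization.inr_mul] using this.eq)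
  rw [← realPart_add_I_smul_imaginaryPart u]
  exact (hsa _ (ℜ u).2).add_left ((hsa _ (ℑ u).2).smul_left Complex.I)

end SquareZero

lemma IsSelfAdjoint.one_le_norm_mul_self_mul_self {A : Type*} [NonUnitalCStarAlgebra A] {e : A}
    (he : IsSelfAdjoint e) (he1 : ‖e‖ = 1) : 1 ≤ ‖e * e * e‖ := by
  have hee : ‖e * e‖ = 1 := by
    have := CStarRing.norm_star_mul_self (x := e)
    rwa [he.star_eq, he1, one_mul] at this
  calc 1 = ‖star (e * e) * (e * e)‖ := by rw [CStarRing.norm_star_mul_self, hee, one_mul]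
    _ = ‖e * e * e * e‖ := by rw [star_mul, he.star_eq]; noncomm_ring
    _ ≤ ‖e * e * e‖ * ‖e‖ := norm_mul_le _ _
    _ = ‖e * e * e‖ := by rw [he1, mul_one]

section Order

variable {A : Type*} [NonUnitalCStarAlgebra A] [PartialOrder A] [StarOrderedRing A]

lemma cstarLe_iff {x y : A} : CStarLe x y ↔ x ≤ y := by
  rw [CStarLe, ← sub_nonneg, CStarAlgebra.nonneg_iff_eq_star_mul_self]

lemma norm_sqrt_mul_le {c S : A} (hc : 0 ≤ c) (hcS : c ≤ star S * S) (y : A) :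
    ‖CFC.sqrt c * y‖ ≤ ‖S * y‖ := by
  refine (sq_le_sq₀ (norm_nonneg _) (norm_nonneg _)).1 ?_
  have hsq : star (CFC.sqrt c * y) * (CFC.sqrt c * y) = star y * c * y := by
    rw [star_mul, (CFC.sqrt_nonneg c).isSelfAdjoint.star_eq, mul_assoc, ← mul_assoc (CFC.sqrt c),
      CFC.sqrt_mul_sqrt_self c, ← mul_assoc]
  have hS : star (S * y) * (S * y) = star y * (star S * S) * y := by
    simp only [star_mul, mul_assoc]
  rw [sq, sq, ← CStarRing.norm_star_mul_self, ← CStarRing.norm_star_mul_self, hsq, hS]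
  exact CStarAlgebra.norm_le_norm_of_nonneg_of_le (star_left_conjugate_nonneg hc y)
    (star_left_conjugate_le_conjugate hcS y)

lemma norm_sq_le_of_le_star_mul_self_of_le {c S b : A} (hc : 0 ≤ c) (hcS : c ≤ star S * S)
    (hb : 0 ≤ b) (hcb : c ≤ b) : ‖c‖ ^ 2 ≤ ‖S * b * star S‖ := by
  obtain ⟨R, rfl⟩ := CStarAlgebra.nonneg_iff_eq_mul_star_self.1 hb
  have hcR : c ≤ star (star R) * star R := by rwa [star_star]
  have hnorm : ‖c‖ ≤ ‖S * R‖ :=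
    calc ‖c‖ = ‖CFC.sqrt c * CFC.sqrt c‖ := by rw [CFC.sqrt_mul_sqrt_self c]
      _ ≤ ‖star R * CFC.sqrt c‖ := norm_sqrt_mul_le hc hcR _
      _ = ‖CFC.sqrt c * R‖ := by
        rw [← norm_star, star_mul, star_star, (CFC.sqrt_nonneg c).isSelfAdjoint.star_eq]
      _ ≤ ‖S * R‖ := norm_sqrt_mul_le hc hcS _
  calc ‖c‖ ^ 2 ≤ ‖S * R‖ ^ 2 := by gcongr
    _ = ‖S * (R * star R) * star S‖ := by
      rw [sq, ← CStarRing.norm_self_mul_star, star_mul]; noncomm_ring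

lemma mul_star_self_mul_self_le_of_norm_le_one {a : A} (ha : ‖a‖ ≤ 1) :
    a * star a * (a * star a) ≤ a * star a := by
  calc a * star a * (a * star a) = a * (star a * a) * star a := by noncomm_ring
    _ ≤ ‖star a * a‖ • (a * star a) := CStarAlgebra.star_right_conjugate_le_norm_smul
    _ ≤ a * star a := smul_le_of_le_one_left (mul_star_self_nonneg a) (by
        rw [CStarRing.norm_star_mul_self]; nlinarith [norm_nonneg a])

end Order

section Counterexample

variable {A : Type*} [NonUnitalCStarAlgebra A]

/- For `x = E₁₂` in `M₂(ℂ)` these are `!![7/20, 11/10; 11/10, -2]`, the projection `E₁₁` and the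
projection onto `(1, 1)`. -/

noncomputable def rieszA (x : A) : A :=
  (7 / 20 : ℝ) • (x * star x * (x * star x)) +
    (11 / 10 : ℝ) • (x * (star x * x) + star (x * (star x * x))) - (2 : ℝ) • (star x * x)

def rieszB₁ (x : A) : A := x * star x * (x * star x)

noncomputable def rieszB₂ (x : A) : A := (2⁻¹ : ℝ) • ((x + star x * x) * star (x + star x * x))

lemma isSelfAdjoint_rieszA (x : A) : IsSelfAdjoint (rieszA x) := by
  simp only [IsSelfAdjoint, rieszA, star_sub, star_add, star_smul, star_trivial, star_mul,
    star_star, mul_assoc, add_comm (star x * (x * star x))]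

lemma rieszB₁_sub_rieszA (x : A) :
    rieszB₁ x - rieszA x =
      star ((-77 / 65 : ℝ) • x + (7 / 10 : ℝ) • (x * star x)) *
          ((-77 / 65 : ℝ) • x + (7 / 10 : ℝ) • (x * star x)) +
        star ((-44 / 65 : ℝ) • x + (2 / 5 : ℝ) • (x * star x)) *
          ((-44 / 65 : ℝ) • x + (2 / 5 : ℝ) • (x * star x)) +
        (9 / 65 : ℝ) • (star x * x) := by
  simp only [rieszA, rieszB₁, star_trivial, star_add, star_smul, star_mul, star_star, mul_add,
    add_mul, smul_mul_assoc, mul_smul_comm, mul_assoc]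
  module

lemma rieszB₂_sub_rieszA (x : A) :
    rieszB₂ x - rieszA x =
      star ((3 / 8 : ℝ) • star x - (20 / 13 : ℝ) • (star x * x)) *
          ((3 / 8 : ℝ) • star x - (20 / 13 : ℝ) • (star x * x)) +
        star ((3 / 40 : ℝ) • star x - (4 / 13 : ℝ) • (star x * x)) *
          ((3 / 40 : ℝ) • star x - (4 / 13 : ℝ) • (star x * x)) +
        (7 / 20 : ℝ) • (x * star x - x * star x * (x * star x)) + (3 / 800 : ℝ) • (x * star x) +
        (663 / 338 : ℝ) • (star x * x - star x * x * (star x * x)) +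
        (13 / 338 : ℝ) • (star x * x) := by
  simp only [rieszA, rieszB₂, star_trivial, star_add, star_sub, star_smul, star_mul, star_star,
    mul_add, add_mul, mul_sub, sub_mul, smul_mul_assoc, mul_smul_comm, mul_assoc]
  module

variable [PartialOrder A] [StarOrderedRing A]

lemma rieszB₁_nonneg (x : A) : 0 ≤ rieszB₁ x := by
  simpa [rieszB₁] using star_mul_self_nonneg (x * star x)

lemma rieszB₂_nonneg (x : A) : 0 ≤ rieszB₂ x :=
  smul_nonneg (by norm_num) (mul_star_self_nonneg _)

lemma rieszA_le_rieszB₁ (x : A) : rieszA x ≤ rieszB₁ x := by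
  rw [← sub_nonneg, rieszB₁_sub_rieszA]
  exact add_nonneg (add_nonneg (star_mul_self_nonneg _) (star_mul_self_nonneg _))
    (smul_nonneg (by norm_num) (star_mul_self_nonneg x))

lemma rieszA_le_rieszB₂ {x : A} (hx : ‖x‖ ≤ 1) : rieszA x ≤ rieszB₂ x := by
  have hf := mul_star_self_mul_self_le_of_norm_le_one hx
  have he := mul_star_self_mul_self_le_of_norm_le_one (a := star x) (by rwa [norm_star])
  rw [star_star] at he
  rw [← sub_nonneg, rieszB₂_sub_rieszA]
  refine add_nonneg (add_nonneg (add_nonneg (add_nonneg (add_nonneg (star_mul_self_nonneg _)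
    (star_mul_self_nonneg _)) ?_) ?_) ?_) ?_
  · exact smul_nonneg (by norm_num) (sub_nonneg.2 hf)
  · exact smul_nonneg (by norm_num) (mul_star_self_nonneg x)
  · exact smul_nonneg (by norm_num) (sub_nonneg.2 he)
  · exact smul_nonneg (by norm_num) (star_mul_self_nonneg x)

lemma norm_sq_le_of_le_rieszB {x c : A} (hx : x * x = 0) (hx1 : ‖x‖ ≤ 1) (hc : 0 ≤ c)
    (hcb₁ : c ≤ rieszB₁ x) (hcb₂ : c ≤ rieszB₂ x) : ‖c‖ ^ 2 ≤ 1 / 2 := by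
  have h₁ : ∀ y, x * (x * y) = 0 := fun y => by rw [← mul_assoc, hx, zero_mul]
  have h₂ : ∀ y, star x * (star x * y) = 0 := fun y => by
    rw [← mul_assoc, ← star_mul, hx, star_zero, zero_mul]
  set f := x * star x
  have hf1 : ‖f‖ ≤ 1 := by
    rw [CStarRing.norm_self_mul_star]; nlinarith [norm_nonneg x]
  have hcf : c ≤ star f * f := by rwa [(IsSelfAdjoint.mul_star_self x).star_eq]
  have hid : f * rieszB₂ x * star f = (2⁻¹ : ℝ) • (f * f * f) := by
    simp only [rieszB₂, f, star_add, star_mul, star_star, mul_add, add_mul, smul_mul_assoc,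
      mul_smul_comm, mul_assoc, h₁, h₂, mul_zero, add_zero]
  refine (norm_sq_le_of_le_star_mul_self_of_le hc hcf (rieszB₂_nonneg x) hcb₂).trans ?_
  rw [hid, norm_smul, Real.norm_eq_abs, abs_of_pos (by norm_num)]
  calc 2⁻¹ * ‖f * f * f‖ ≤ 2⁻¹ * (‖f‖ * ‖f‖ * ‖f‖) := by
        gcongr; exact (norm_mul_le _ _).trans (by gcongr; exact norm_mul_le _ _)
    _ ≤ 2⁻¹ * (1 * 1 * 1) := by gcongr
    _ = 1 / 2 := by norm_num

lemma le_norm_of_rieszA_le {x c : A} (hx : x * x = 0) (hx1 : ‖x‖ = 1) (hc : IsSelfAdjoint c)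
    (hac : rieszA x ≤ c) : 91 / 100 ≤ ‖c‖ * (29 / 25) := by
  have h₁ : ∀ y, x * (x * y) = 0 := fun y => by rw [← mul_assoc, hx, zero_mul]
  have h₂ : ∀ y, star x * (star x * y) = 0 := fun y => by
    rw [← mul_assoc, ← star_mul, hx, star_zero, zero_mul]
  set e := star x * x
  have he : IsSelfAdjoint e := .star_mul_self x
  have he1 : ‖e‖ = 1 := by rw [CStarRing.norm_star_mul_self, hx1, one_mul]
  set w := x + (2 / 5 : ℝ) • e
  have hwa : star w * rieszA x * w = (91 / 100 : ℝ) • (e * e * e) := by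
    simp only [rieszA, w, e, star_trivial, star_add, star_smul, star_mul, star_star, mul_add,
      add_mul, mul_sub, sub_mul, smul_mul_assoc, mul_smul_comm, mul_assoc, hx, h₁, h₂, mul_zero,
      smul_zero, add_zero, zero_add, sub_zero]
    module
  have hww : star w * w = e + (4 / 25 : ℝ) • (e * e) := by
    simp only [w, e, star_trivial, star_add, star_smul, star_mul, star_star, mul_add, add_mul,
      smul_mul_assoc, mul_smul_comm, mul_assoc, hx, h₂, mul_zero, smul_zero, add_zero, zero_add]
    module
  have hle : (91 / 100 : ℝ) • (e * e * e) ≤ ‖c‖ • (e + (4 / 25 : ℝ) • (e * e)) := by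
    rw [← hwa, ← hww]
    exact (star_left_conjugate_le_conjugate hac w).trans
      (CStarAlgebra.star_left_conjugate_le_norm_smul (hb := hc))
  have he3 : 0 ≤ e * e * e := by
    simpa [he.star_eq] using star_left_conjugate_nonneg (star_mul_self_nonneg x) e
  have hnorm := CStarAlgebra.norm_le_norm_of_nonneg_of_le (smul_nonneg (by norm_num) he3) hle
  rw [norm_smul, norm_smul, Real.norm_eq_abs, Real.norm_eq_abs, abs_of_pos (by norm_num),
    abs_of_nonneg (norm_nonneg _)] at hnorm
  have hsum : ‖e + (4 / 25 : ℝ) • (e * e)‖ ≤ 29 / 25 := by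
    calc _ ≤ ‖e‖ + 4 / 25 * (‖e‖ * ‖e‖) := by
          refine (norm_add_le _ _).trans ?_
          rw [norm_smul, Real.norm_eq_abs, abs_of_pos (by norm_num)]
          gcongr; exact norm_mul_le _ _
      _ = 29 / 25 := by rw [he1]; norm_num
  nlinarith [he.one_le_norm_mul_self_mul_self he1, norm_nonneg c]

end Counterexample

/-- If `A` is a non-commutative C*-algebra, then `A_sa` with the usual order
does not have the Riesz interpolation property: there are self-adjoint `a₁, a₂, b₁, b₂` with
`aᵢ ≤ bⱼ` for all `i, j`, but no self-adjoint `c` with `aᵢ ≤ c ≤ bⱼ` for all `i, j`. -/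
theorem not_rieszInterpolation_of_noncomm {A : Type*} [NonUnitalCStarAlgebra A]
    (h : ∃ x y : A, x * y ≠ y * x) :
    ∃ a₁ a₂ b₁ b₂ : A,
      IsSelfAdjoint a₁ ∧ IsSelfAdjoint a₂ ∧ IsSelfAdjoint b₁ ∧ IsSelfAdjoint b₂ ∧
      CStarLe a₁ b₁ ∧ CStarLe a₁ b₂ ∧ CStarLe a₂ b₁ ∧ CStarLe a₂ b₂ ∧
      ¬ ∃ c : A, IsSelfAdjoint c ∧
        CStarLe a₁ c ∧ CStarLe a₂ c ∧ CStarLe c b₁ ∧ CStarLe c b₂ := by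
  let _ := CStarAlgebra.spectralOrder A
  have := CStarAlgebra.spectralOrderedRing A
  obtain ⟨z, hz, hz0⟩ : ∃ z : A, z * z = 0 ∧ z ≠ 0 := by
    by_contra! hA
    obtain ⟨u, v, huv⟩ := h
    exact huv (commute_of_forall_mul_self_eq_zero hA u v).eq
  set x := (‖z‖⁻¹ : ℂ) • z
  have hx : x * x = 0 := by rw [smul_mul_smul_comm, hz, smul_zero]
  have hx1 : ‖x‖ = 1 := norm_smul_inv_norm hz0
  simp only [cstarLe_iff]
  refine ⟨0, rieszA x, rieszB₁ x, rieszB₂ x, .zero _, isSelfAdjoint_rieszA x,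
    .of_nonneg (rieszB₁_nonneg x), .of_nonneg (rieszB₂_nonneg x), rieszB₁_nonneg x,
    rieszB₂_nonneg x, rieszA_le_rieszB₁ x, rieszA_le_rieszB₂ hx1.le, ?_⟩
  rintro ⟨c, hc, hc0, hac, hcb₁, hcb₂⟩
  have hupper := norm_sq_le_of_le_rieszB hx hx1.le hc0 hcb₁ hcb₂
  have hlower := le_norm_of_rieszA_le hx hx1 hc hac
  nlinarith [norm_nonneg c]
end
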